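/- arXiv:2306.13077 — 3 statements merged into one kernel-verified Lean document; each statement's English description precedes it below -/
import Mathlib

section
/- Let Δ ∈ ℕ and A > 0. There exists a constant c > 0 depending only on Δ and A such that for every finite connected simple graph G on n vertices with all vertex degrees at most Δ, all vertices x and y, and every integer t with 1 ≤ t < A·n², the lazy simple random walk on G satisfies P_lazy^t(x,y) ≤ c/√t. -/
set_option linter.unusedSectionVars false
set_option linter.unreachableTactic false
set_option linter.unusedTactic false
set_option linter.unusedVariables false
set_option maxHeartbeats 1000000



open Filter

noncomputable section

/-- Transition matrix of the simple random walk on a finite graph. -/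
noncomputable def srwMatrix {V : Type*} [Fintype V] (G : SimpleGraph V) [DecidableRel G.Adj] :
    Matrix V V ℝ :=
  fun x y => if G.Adj x y then ((G.degree x : ℝ))⁻¹ else 0

/-- The lazy version `(I + P)/2` of a transition matrix `P`. -/
noncomputable def lazyMatrix {V : Type*} [Fintype V] [DecidableEq V] (P : Matrix V V ℝ) :
    Matrix V V ℝ :=
  (2 : ℝ)⁻¹ • (1 + P)

namespace Stmt7Aux

variable {V : Type} [Fintype V] [DecidableEq V] (G : SimpleGraph V) [DecidableRel G.Adj]

noncomputable def dd (x : V) : ℝ := (G.degree x : ℝ)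

noncomputable def NN : Matrix V V ℝ :=
  fun x y => if G.Adj x y then (Real.sqrt (dd G x) * Real.sqrt (dd G y))⁻¹ else 0

noncomputable def SS : Matrix V V ℝ :=
  fun x y => (2:ℝ)⁻¹ * ((if x = y then (1:ℝ) else 0) + NN G x y)

noncomputable def Ed (g : V → ℝ) : ℝ := ∑ z, ∑ u, if G.Adj z u then (g z - g u)^2 else 0

-- [chunk1 lemmas assumed: one_le_dd, dd_pos, sqrt_dd_pos, one_le_sqrt_dd, NN_nonneg,
--  NN_symm, SS_nonneg, SS_symm, sum_ite_adj, NN_contract]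
section basic
variable (hd : ∀ x : V, 1 ≤ G.degree x)
include hd

lemma one_le_dd (x : V) : 1 ≤ dd G x := by
  exact (Nat.one_le_cast (α := ℝ)).mpr (hd x)

lemma dd_pos (x : V) : 0 < dd G x := lt_of_lt_of_le one_pos (one_le_dd G hd x)

lemma sqrt_dd_pos (x : V) : 0 < Real.sqrt (dd G x) :=
  Real.sqrt_pos.mpr (dd_pos G hd x)

lemma one_le_sqrt_dd (x : V) : 1 ≤ Real.sqrt (dd G x) := by
  rw [show (1:ℝ) = Real.sqrt 1 from (Real.sqrt_one).symm]
  exact Real.sqrt_le_sqrt (one_le_dd G hd x)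

omit hd in
lemma NN_nonneg (x y : V) : 0 ≤ NN G x y := by
  unfold NN
  split
  · positivity
  · exact le_rfl

omit hd in
lemma NN_symm (x y : V) : NN G x y = NN G y x := by
  unfold NN
  by_cases h : G.Adj x y
  · rw [if_pos h, if_pos h.symm, mul_comm]
  · rw [if_neg h, if_neg (fun h' => h h'.symm)]

omit hd in
lemma SS_nonneg (x y : V) : 0 ≤ SS G x y := by
  unfold SS
  have := NN_nonneg G x y
  positivity

omit hd in
lemma SS_symm (x y : V) : SS G x y = SS G y x := by
  unfold SS
  rw [NN_symm]
  congr 2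
  by_cases h : x = y
  · simp [h]
  · rw [if_neg h, if_neg (fun h' => h h'.symm)]

omit hd in
lemma sum_ite_adj (z : V) (c : ℝ) :
    ∑ u, (if G.Adj z u then c else 0) = (G.degree z : ℝ) * c := by
  rw [← Finset.sum_filter, ← SimpleGraph.neighborFinset_eq_filter, Finset.sum_const,
    nsmul_eq_mul, SimpleGraph.degree]

/-- Cauchy–Schwarz bound: `‖N w‖ ≤ ‖w‖`. -/
lemma NN_contract (w : V → ℝ) :
    ∑ z, (∑ u, NN G z u * w u)^2 ≤ ∑ z, (w z)^2 := by
  have key : ∀ z : V, (∑ u, NN G z u * w u)^2 ≤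
      ∑ u, (if G.Adj z u then (w u)^2 / dd G u else 0) := by
    intro z
    have expand : ∀ u, NN G z u * w u =
        (if G.Adj z u then (Real.sqrt (dd G z))⁻¹ else 0) *
        (if G.Adj z u then w u / Real.sqrt (dd G u) else 0) := by
      intro u
      unfold NN
      by_cases h : G.Adj z u
      · rw [if_pos h, if_pos h, if_pos h]
        field_simp
      · simp [h]
    calc (∑ u, NN G z u * w u)^2
        = (∑ u, (if G.Adj z u then (Real.sqrt (dd G z))⁻¹ else 0) *
            (if G.Adj z u then w u / Real.sqrt (dd G u) else 0))^2 := by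
          congr 1; exact Finset.sum_congr rfl (fun u _ => expand u)
      _ ≤ (∑ u, (if G.Adj z u then (Real.sqrt (dd G z))⁻¹ else 0)^2) *
          (∑ u, (if G.Adj z u then w u / Real.sqrt (dd G u) else 0)^2) :=
          Finset.sum_mul_sq_le_sq_mul_sq _ _ _
      _ = (∑ u, (if G.Adj z u then (dd G z)⁻¹ else 0)) *
          (∑ u, (if G.Adj z u then (w u)^2 / dd G u else 0)) := by
          congr 1
          · exact Finset.sum_congr rfl (fun u _ => by
              split
              · rw [← Real.sqrt_inv, Real.sq_sqrt (inv_nonneg.mpr (dd_pos G hd z).le)]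
              · simp)
          · exact Finset.sum_congr rfl (fun u _ => by
              split
              · rw [div_pow, Real.sq_sqrt (dd_pos G hd u).le]
              · simp)
      _ = ∑ u, (if G.Adj z u then (w u)^2 / dd G u else 0) := by
          rw [sum_ite_adj, ← dd]
          rw [mul_inv_cancel₀ (dd_pos G hd z).ne', one_mul]
  calc ∑ z, (∑ u, NN G z u * w u)^2
      ≤ ∑ z, ∑ u, (if G.Adj z u then (w u)^2 / dd G u else 0) :=
        Finset.sum_le_sum (fun z _ => key z)
    _ = ∑ u, ∑ z, (if G.Adj z u then (w u)^2 / dd G u else 0) := Finset.sum_comm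
    _ = ∑ u, (w u)^2 := by
        refine Finset.sum_congr rfl (fun u _ => ?_)
        have : ∀ z, (if G.Adj z u then (w u)^2 / dd G u else 0)
            = (if G.Adj u z then (w u)^2 / dd G u else 0) := by
          intro z
          by_cases h : G.Adj u z
          · rw [if_pos h.symm, if_pos h]
          · rw [if_neg (fun h' => h h'.symm), if_neg h]
        rw [Finset.sum_congr rfl (fun z _ => this z), sum_ite_adj, ← dd,
          mul_div_cancel₀ _ (dd_pos G hd u).ne']

-- new chunk

omit hd in
lemma lazy_apply (x y : V) : lazyMatrix (srwMatrix G) x y =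
    (2:ℝ)⁻¹ * ((if x = y then (1:ℝ) else 0) + (if G.Adj x y then (dd G x)⁻¹ else 0)) := by
  simp [lazyMatrix, srwMatrix, Matrix.add_apply, Matrix.one_apply, dd]

lemma one_step (z y : V) :
    Real.sqrt (dd G z) * lazyMatrix (srwMatrix G) z y = SS G z y * Real.sqrt (dd G y) := by
  rw [lazy_apply, SS]
  by_cases h : z = y
  · subst h
    simp [NN, G.irrefl]
    ring
  · rw [if_neg h]
    by_cases ha : G.Adj z y
    · rw [if_pos ha, NN, if_pos ha]
      have hz := (sqrt_dd_pos G hd z).ne'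
      have hy := (sqrt_dd_pos G hd y).ne'
      have hdz : dd G z = Real.sqrt (dd G z) * Real.sqrt (dd G z) :=
        (Real.mul_self_sqrt (dd_pos G hd z).le).symm
      rw [zero_add, zero_add, hdz]
      field_simp
      ring_nf
      rw [Real.sqrt_sq (Real.sqrt_nonneg _)]
    · simp [NN, ha]

lemma conj (t : ℕ) (x y : V) :
    Real.sqrt (dd G x) * ((lazyMatrix (srwMatrix G)) ^ t) x y
      = (SS G ^ t) x y * Real.sqrt (dd G y) := by
  induction t generalizing y with
  | zero =>
    simp only [pow_zero, Matrix.one_apply]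
    by_cases h : x = y
    · subst h; simp
    · simp [h]
  | succ t ih =>
    rw [pow_succ, pow_succ, Matrix.mul_apply, Matrix.mul_apply, Finset.mul_sum,
      Finset.sum_mul]
    refine Finset.sum_congr rfl (fun z _ => ?_)
    have h1 : Real.sqrt (dd G x) * (((lazyMatrix (srwMatrix G)) ^ t) x z
        * lazyMatrix (srwMatrix G) z y)
        = (Real.sqrt (dd G x) * ((lazyMatrix (srwMatrix G)) ^ t) x z)
          * lazyMatrix (srwMatrix G) z y := by ring
    rw [h1, ih]
    have h2 : (SS G ^ t) x z * Real.sqrt (dd G z) * lazyMatrix (srwMatrix G) z y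
        = (SS G ^ t) x z * (Real.sqrt (dd G z) * lazyMatrix (srwMatrix G) z y) := by ring
    rw [h2, one_step G hd, ← mul_assoc]

omit hd in
lemma lazy_nonneg (x y : V) : 0 ≤ lazyMatrix (srwMatrix G) x y := by
  rw [lazy_apply]
  have : (0:ℝ) ≤ (if G.Adj x y then (dd G x)⁻¹ else 0) := by
    split
    · have : (0:ℝ) ≤ dd G x := Nat.cast_nonneg _
      positivity
    · exact le_rfl
  positivity

omit hd in
lemma lazy_pow_nonneg (t : ℕ) (x y : V) : 0 ≤ ((lazyMatrix (srwMatrix G)) ^ t) x y := by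
  induction t generalizing y with
  | zero =>
    simp only [pow_zero, Matrix.one_apply]
    split <;> norm_num
  | succ t ih =>
    rw [pow_succ, Matrix.mul_apply]
    exact Finset.sum_nonneg fun z _ => mul_nonneg (ih z) (lazy_nonneg G z _)

lemma lazy_rowsum (x : V) : ∑ y, lazyMatrix (srwMatrix G) x y = 1 := by
  have : ∑ y, lazyMatrix (srwMatrix G) x y
      = (2:ℝ)⁻¹ * ((∑ y, if x = y then (1:ℝ) else 0) + ∑ y, if G.Adj x y then (dd G x)⁻¹ else 0) := by
    rw [← Finset.sum_add_distrib, Finset.mul_sum]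
    exact Finset.sum_congr rfl fun y _ => lazy_apply G x y
  rw [this, sum_ite_adj, Finset.sum_ite_eq Finset.univ x (fun _ => (1:ℝ))]
  rw [if_pos (Finset.mem_univ x)]
  have h2 : (G.degree x : ℝ) * (dd G x)⁻¹ = 1 := by
    have h0 : (0:ℝ) < (G.degree x : ℝ) := by exact_mod_cast hd x
    rw [dd]
    exact mul_inv_cancel₀ h0.ne'
  rw [h2]
  norm_num

lemma lazy_pow_rowsum (t : ℕ) (x : V) : ∑ y, ((lazyMatrix (srwMatrix G)) ^ t) x y = 1 := by
  induction t with
  | zero => simp [Matrix.one_apply]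
  | succ t ih =>
    rw [pow_succ]
    simp only [Matrix.mul_apply]
    rw [Finset.sum_comm]
    have h1 : ∀ z : V, ∑ y, ((lazyMatrix (srwMatrix G)) ^ t) x z * lazyMatrix (srwMatrix G) z y
        = ((lazyMatrix (srwMatrix G)) ^ t) x z := fun z => by
      rw [← Finset.mul_sum, lazy_rowsum G hd z, mul_one]
    rw [Finset.sum_congr rfl (fun z _ => h1 z)]
    exact ih

omit hd in
lemma SS_pow_symm (t : ℕ) (x y : V) : (SS G ^ t) x y = (SS G ^ t) y x := by
  have hs : Matrix.transpose (SS G) = SS G := by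
    ext a b
    exact SS_symm G b a
  have h2 : Matrix.transpose (SS G ^ t) = SS G ^ t := by
    rw [Matrix.transpose_pow, hs]
  conv_lhs => rw [← h2]
  rfl

lemma SS_pow_nonneg (t : ℕ) (x y : V) : 0 ≤ (SS G ^ t) x y := by
  have h := conj G hd t x y
  have hx := sqrt_dd_pos G hd x
  have hy := sqrt_dd_pos G hd y
  nlinarith [lazy_pow_nonneg G t x y, mul_nonneg hx.le (lazy_pow_nonneg G t x y)]

omit hd in
lemma SS_diag_ge (x : V) : (1:ℝ)/2 ≤ SS G x x := by
  rw [SS, if_pos rfl]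
  have := NN_nonneg G x x
  linarith

lemma SS_pow_diag_pos (t : ℕ) (x : V) : 0 < (SS G ^ t) x x := by
  induction t with
  | zero => simp [Matrix.one_apply]
  | succ t ih =>
    rw [pow_succ, Matrix.mul_apply]
    have h1 : (SS G ^ t) x x * SS G x x ≤ ∑ z, (SS G ^ t) x z * SS G z x :=
      Finset.single_le_sum (f := fun z => (SS G ^ t) x z * SS G z x)
        (fun z _ => mul_nonneg (SS_pow_nonneg G hd t x z) (SS_nonneg G z x)) (Finset.mem_univ x)
    have h2 : 0 < (SS G ^ t) x x * SS G x x :=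
      mul_pos ih (lt_of_lt_of_le (by norm_num) (SS_diag_ge G x))
    linarith

end basic

/-- the evolved delta vector at `x`, time `t` -/
noncomputable def wv (x : V) (t : ℕ) : V → ℝ := fun z => (SS G ^ t) x z

/-- its squared norm -/
noncomputable def vv (x : V) (t : ℕ) : ℝ := ∑ z, (wv G x t z)^2

section basic2
variable (hd : ∀ x : V, 1 ≤ G.degree x)
include hd

omit hd in
lemma vv_zero (x : V) : vv G x 0 = 1 := by
  unfold vv wv
  simp only [pow_zero, Matrix.one_apply]
  rw [Finset.sum_congr rfl (fun z _ => by
    show (if x = z then (1:ℝ) else 0)^2 = if x = z then (1:ℝ) else 0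
    split <;> norm_num)]
  simp

lemma vv_pos (x : V) (t : ℕ) : 0 < vv G x t := by
  have h1 : (wv G x t x)^2 ≤ vv G x t :=
    Finset.single_le_sum (f := fun z => (wv G x t z)^2) (fun z _ => sq_nonneg _) (Finset.mem_univ x)
  have h2 : 0 < wv G x t x := SS_pow_diag_pos G hd t x
  nlinarith

omit hd in
lemma wv_succ (x : V) (t : ℕ) (z : V) :
    wv G x (t+1) z = (2:ℝ)⁻¹ * (wv G x t z + ∑ u, NN G z u * wv G x t u) := by
  unfold wv
  rw [pow_succ, Matrix.mul_apply]
  have : ∀ u : V, (SS G ^ t) x u * SS G u z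
      = (2:ℝ)⁻¹ * ((if z = u then (SS G ^ t) x u else 0) + NN G z u * (SS G ^ t) x u) := by
    intro u
    rw [SS, NN_symm G z u]
    by_cases h : u = z
    · subst h; rw [if_pos rfl, if_pos rfl]; ring
    · rw [if_neg h, if_neg (fun h' => h h'.symm)]; ring
  rw [Finset.sum_congr rfl (fun u _ => this u), ← Finset.mul_sum, Finset.sum_add_distrib,
    Finset.sum_ite_eq Finset.univ z (fun u => (SS G ^ t) x u), if_pos (Finset.mem_univ z)]

omit hd in
lemma Ed_nonneg (g : V → ℝ) : 0 ≤ Ed G g :=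
  Finset.sum_nonneg fun z _ => Finset.sum_nonneg fun u _ => by
    split
    · exact sq_nonneg _
    · exact le_rfl

lemma Ed_identity (w : V → ℝ) :
    Ed G (fun z => w z / Real.sqrt (dd G z))
      = 2 * ∑ z, (w z)^2 - 2 * ∑ z, w z * ∑ u, NN G z u * w u := by
  set h : V → ℝ := fun z => w z / Real.sqrt (dd G z) with hh
  have key : ∀ z u : V, (if G.Adj z u then (h z - h u)^2 else 0)
      = ((if G.Adj z u then (h z)^2 else 0) + (if G.Adj z u then (h u)^2 else 0))
        - 2 * (w z * (NN G z u * w u)) := by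
    intro z u
    by_cases ha : G.Adj z u
    · rw [if_pos ha, if_pos ha, if_pos ha, NN, if_pos ha]
      have : w z * ((Real.sqrt (dd G z) * Real.sqrt (dd G u))⁻¹ * w u) = h z * h u := by
        simp only [hh]
        rw [mul_inv]
        have h1 := (sqrt_dd_pos G hd z).ne'
        have h2 := (sqrt_dd_pos G hd u).ne'
        field_simp
      rw [this]
      ring
    · rw [if_neg ha, if_neg ha, if_neg ha, NN, if_neg ha]
      ring
  have hsq : ∀ z : V, dd G z * (h z)^2 = (w z)^2 := by
    intro z
    simp only [hh]
    rw [div_pow, Real.sq_sqrt (dd_pos G hd z).le]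
    rw [mul_comm, div_mul_cancel₀ _ (dd_pos G hd z).ne']
  have hA : ∑ z, ∑ u, (if G.Adj z u then (h z)^2 else 0) = ∑ z, (w z)^2 := by
    refine Finset.sum_congr rfl fun z _ => ?_
    rw [sum_ite_adj, ← dd, hsq]
  have hB : ∑ z, ∑ u, (if G.Adj z u then (h u)^2 else 0) = ∑ z, (w z)^2 := by
    rw [Finset.sum_comm]
    refine Finset.sum_congr rfl fun u _ => ?_
    have : ∀ z, (if G.Adj z u then (h u)^2 else 0) = (if G.Adj u z then (h u)^2 else 0) := by
      intro z
      by_cases hzu : G.Adj z u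
      · rw [if_pos hzu, if_pos hzu.symm]
      · rw [if_neg hzu, if_neg (fun h' => hzu h'.symm)]
    rw [Finset.sum_congr rfl (fun z _ => this z), sum_ite_adj, ← dd, hsq]
  calc Ed G h = ∑ z, ∑ u, (((if G.Adj z u then (h z)^2 else 0) + (if G.Adj z u then (h u)^2 else 0))
        - 2 * (w z * (NN G z u * w u))) := by
        unfold Ed
        exact Finset.sum_congr rfl fun z _ => Finset.sum_congr rfl fun u _ => key z u
    _ = (∑ z, ∑ u, ((if G.Adj z u then (h z)^2 else 0) + (if G.Adj z u then (h u)^2 else 0)))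
        - ∑ z, ∑ u, 2 * (w z * (NN G z u * w u)) := by
        rw [← Finset.sum_sub_distrib]
        exact Finset.sum_congr rfl fun z _ => by rw [← Finset.sum_sub_distrib]
    _ = 2 * ∑ z, (w z)^2 - 2 * ∑ z, w z * ∑ u, NN G z u * w u := by
        congr 1
        · rw [show (∑ z, ∑ u, ((if G.Adj z u then (h z)^2 else 0) + (if G.Adj z u then (h u)^2 else 0)))
            = (∑ z, ∑ u, (if G.Adj z u then (h z)^2 else 0))
              + ∑ z, ∑ u, (if G.Adj z u then (h u)^2 else 0) from by
            rw [← Finset.sum_add_distrib]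
            exact Finset.sum_congr rfl fun z _ => by rw [← Finset.sum_add_distrib]]
          rw [hA, hB]
          ring
        · simp only [Finset.mul_sum]
          try exact Finset.sum_congr rfl fun z _ => Finset.sum_congr rfl fun u _ => by ring

lemma dirichlet_step (x : V) (t : ℕ) :
    vv G x (t+1) + Ed G (fun z => wv G x t z / Real.sqrt (dd G z)) / 4 ≤ vv G x t := by
  set w : V → ℝ := wv G x t with hw
  set Nw : V → ℝ := fun z => ∑ u, NN G z u * w u with hNw
  have hvs : vv G x (t+1) = (4:ℝ)⁻¹ * ∑ z, (w z + Nw z)^2 := by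
    unfold vv
    rw [Finset.mul_sum]
    refine Finset.sum_congr rfl fun z _ => ?_
    rw [wv_succ]
    ring
  have hexp : ∑ z, (w z + Nw z)^2
      = ∑ z, (w z)^2 + 2 * (∑ z, w z * Nw z) + ∑ z, (Nw z)^2 := by
    rw [Finset.mul_sum, ← Finset.sum_add_distrib, ← Finset.sum_add_distrib]
    exact Finset.sum_congr rfl fun z _ => by ring
  have hE := Ed_identity G hd w
  have hC : ∑ z, (Nw z)^2 ≤ ∑ z, (w z)^2 := NN_contract G hd w
  have hv : vv G x t = ∑ z, (w z)^2 := rfl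
  rw [hvs, hexp, hv, hE]
  linarith

omit hd in
lemma tele (g : V → ℝ) {a z : V} (q : G.Walk a z) :
    (q.darts.map (fun d => g d.toProd.1 - g d.toProd.2)).sum = g a - g z := by
  induction q with
  | nil => simp
  | cons h p ih =>
    rw [SimpleGraph.Walk.darts_cons, List.map_cons, List.sum_cons, ih]
    ring

omit hd in
lemma trunc (g : V → ℝ) {a z₀ : V} (p : G.Walk a z₀) (hp : p.IsPath) (hz : g z₀ = 0) :
    ∃ (u : V) (q : G.Walk a u), q.IsPath ∧ g u = 0 ∧
      (∀ v ∈ q.support, v ≠ u → g v ≠ 0) ∧ (∀ v ∈ q.support, v ∈ p.support) := by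
  induction p with
  | nil =>
    exact ⟨_, SimpleGraph.Walk.nil, SimpleGraph.Walk.IsPath.nil, hz,
      fun v hv hne => absurd (by simpa using hv) hne, fun v hv => hv⟩
  | @cons a b z₀ hab p ih =>
    rw [SimpleGraph.Walk.cons_isPath_iff] at hp
    by_cases hga : g a = 0
    · refine ⟨a, SimpleGraph.Walk.nil, SimpleGraph.Walk.IsPath.nil, hga,
        fun v hv hne => absurd (by simpa using hv) hne, fun v hv => ?_⟩
      have hva : v = a := by simpa using hv
      subst hva
      exact SimpleGraph.Walk.start_mem_support _
    · obtain ⟨u, q, hq, hu, hcond, hsub⟩ := ih hp.1 hz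
      refine ⟨u, SimpleGraph.Walk.cons hab q, ?_, hu, ?_, ?_⟩
      · rw [SimpleGraph.Walk.cons_isPath_iff]
        exact ⟨hq, fun hmem => hp.2 (hsub a hmem)⟩
      · intro v hv hne
        rw [SimpleGraph.Walk.support_cons, List.mem_cons] at hv
        rcases hv with rfl | hv
        · exact hga
        · exact hcond v hv hne
      · intro v hv
        rw [SimpleGraph.Walk.support_cons, List.mem_cons] at hv ⊢
        rcases hv with rfl | hv
        · exact Or.inl rfl
        · exact Or.inr (hsub v hv)

omit hd in
lemma walk_bound (hconn : G.Preconnected) (g : V → ℝ) (hg : ∀ z, 0 ≤ g z)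
    {z₀ : V} (hz : g z₀ = 0) (a : V) :
    (g a)^2 ≤ ((Finset.univ.filter (fun v => g v ≠ 0)).card : ℝ) * Ed G g := by
  set K : ℕ := (Finset.univ.filter (fun v => g v ≠ 0)).card with hK
  have hEd := Ed_nonneg G g
  by_cases hga : g a = 0
  · rw [hga]
    norm_num
    positivity
  · obtain ⟨u, q, hq, hu, hcond, _⟩ := trunc G g ((hconn a z₀).some.toPath : G.Path a z₀).1
      ((hconn a z₀).some.toPath).2 hz
    have hsupnd : q.support.Nodup := q.isPath_def.mp hq
    have hdartsnd : q.darts.Nodup := by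
      have he : q.edges.Nodup := SimpleGraph.Walk.edges_nodup_of_support_nodup hsupnd
      exact List.Nodup.of_map SimpleGraph.Dart.edge he
    set s : Finset (G.Dart) := q.darts.toFinset with hs
    have hcards : s.card = q.length := by
      rw [hs, List.toFinset_card_of_nodup hdartsnd, SimpleGraph.Walk.length_darts]
    -- length ≤ K
    have hlen : q.length ≤ K := by
      have h1 : (q.support.toFinset.erase u) ⊆ Finset.univ.filter (fun v => g v ≠ 0) := by
        intro v hv
        rw [Finset.mem_erase, List.mem_toFinset] at hv
        exact Finset.mem_filter.mpr ⟨Finset.mem_univ v, hcond v hv.2 hv.1⟩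
      have h2 : (q.support.toFinset.erase u).card = q.length := by
        rw [Finset.card_erase_of_mem (List.mem_toFinset.mpr (SimpleGraph.Walk.end_mem_support q)),
          List.toFinset_card_of_nodup hsupnd, SimpleGraph.Walk.length_support]
        omega
      calc q.length = (q.support.toFinset.erase u).card := h2.symm
        _ ≤ K := Finset.card_le_card h1
    -- telescoping
    have htel : g a = (q.darts.map (fun d => g d.toProd.1 - g d.toProd.2)).sum := by
      rw [tele G g q, hu, sub_zero]
    have htel2 : g a = ∑ d ∈ s, (g d.toProd.1 - g d.toProd.2) := by
      rw [htel, hs, List.sum_toFinset _ hdartsnd]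
    -- Cauchy-Schwarz
    have hcs : (g a)^2 ≤ (s.card : ℝ) * ∑ d ∈ s, (g d.toProd.1 - g d.toProd.2)^2 := by
      rw [htel2]
      calc (∑ d ∈ s, (g d.toProd.1 - g d.toProd.2))^2
          = (∑ d ∈ s, 1 * (g d.toProd.1 - g d.toProd.2))^2 := by simp
        _ ≤ (∑ d ∈ s, (1:ℝ)^2) * ∑ d ∈ s, (g d.toProd.1 - g d.toProd.2)^2 :=
            Finset.sum_mul_sq_le_sq_mul_sq s _ _
        _ = (s.card : ℝ) * ∑ d ∈ s, (g d.toProd.1 - g d.toProd.2)^2 := by simp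
    -- energy bound
    have henergy : ∑ d ∈ s, (g d.toProd.1 - g d.toProd.2)^2 ≤ Ed G g := by
      have hinj : Function.Injective (fun d : G.Dart => d.toProd) := fun d1 d2 h =>
        SimpleGraph.Dart.ext d1 d2 h
      have him : (∑ p ∈ s.image (fun d : G.Dart => d.toProd), (g p.1 - g p.2)^2)
          = ∑ d ∈ s, (g d.toProd.1 - g d.toProd.2)^2 :=
        Finset.sum_image (fun d1 _ d2 _ h => hinj h)
      have hEdeq : Ed G g = ∑ p ∈ (Finset.univ : Finset (V × V)), if G.Adj p.1 p.2 then (g p.1 - g p.2)^2 else 0 := by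
        rw [← Finset.univ_product_univ, Finset.sum_product]
        rfl
      rw [hEdeq, ← Finset.sum_filter, ← him]
      refine Finset.sum_le_sum_of_subset_of_nonneg ?_ (fun p _ _ => sq_nonneg _)
      intro p hp
      rw [Finset.mem_image] at hp
      obtain ⟨d, _, rfl⟩ := hp
      exact Finset.mem_filter.mpr ⟨Finset.mem_univ _, d.adj⟩
    calc (g a)^2 ≤ (s.card : ℝ) * ∑ d ∈ s, (g d.toProd.1 - g d.toProd.2)^2 := hcs
      _ ≤ (K : ℝ) * Ed G g := by
        apply mul_le_mul
        · exact_mod_cast hcards ▸ Nat.cast_le.mpr hlen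
        · exact henergy
        · exact Finset.sum_nonneg fun d _ => sq_nonneg _
        · positivity

lemma mass (x : V) (t : ℕ) :
    ∑ z, Real.sqrt (dd G z) * wv G x t z = Real.sqrt (dd G x) := by
  unfold wv
  have h1 : ∀ z : V, Real.sqrt (dd G z) * (SS G ^ t) x z
      = Real.sqrt (dd G x) * ((lazyMatrix (srwMatrix G))^t) x z := by
    intro z
    rw [mul_comm]
    exact (conj G hd t x z).symm
  rw [Finset.sum_congr rfl fun z _ => h1 z, ← Finset.mul_sum, lazy_pow_rowsum G hd t x, mul_one]

lemma nash (hconn : G.Preconnected) {Δ : ℕ} (hΔ1 : 1 ≤ (Δ:ℝ)) (hΔ : ∀ x, G.degree x ≤ Δ)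
    (hcard : 0 < Fintype.card V)
    (h : V → ℝ) (hh : ∀ z, 0 ≤ h z) {m : ℝ} (hm : m = ∑ z, dd G z * h z)
    (hm1 : 1 ≤ m) (hmΔ : m^2 ≤ (Δ:ℝ)) {v : ℝ} (hv : v = ∑ z, dd G z * (h z)^2)
    (hbig : 4 * (Δ:ℝ) / (Fintype.card V : ℝ) < v) :
    v^3 ≤ 32 * (Δ:ℝ) * m^4 * Ed G h := by
  have hn : (0:ℝ) < (Fintype.card V : ℝ) := by exact_mod_cast hcard
  have hv0 : 0 < v := lt_trans (by positivity) hbig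
  have hm0 : (0:ℝ) < m := lt_of_lt_of_le one_pos hm1
  set lam : ℝ := v / (4*m) with hlamdef
  have hlam : 0 < lam := by positivity
  set g : V → ℝ := fun z => max (h z - lam) 0 with hgdef
  have hg0 : ∀ z, 0 ≤ g z := fun z => le_max_right _ _
  have hpoint : ∀ z, (h z)^2 ≤ (g z)^2 + 2*lam*(h z) := by
    intro z
    rcases le_total (h z) lam with hc | hc
    · have hgz : g z = 0 := max_eq_right (by linarith)
      rw [hgz]
      nlinarith [hh z]
    · have hgz : g z = h z - lam := max_eq_left (by linarith)
      rw [hgz]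
      nlinarith
  have hb : v/2 ≤ ∑ z, dd G z * (g z)^2 := by
    have h1 : v ≤ (∑ z, dd G z * (g z)^2) + 2*lam*m := by
      rw [hv, hm, Finset.mul_sum, ← Finset.sum_add_distrib]
      refine Finset.sum_le_sum fun z _ => ?_
      have hdz := dd_pos G hd z
      nlinarith [hpoint z, mul_le_mul_of_nonneg_left (hpoint z) hdz.le]
    have h2 : 2*lam*m = v/2 := by
      rw [hlamdef]
      field_simp
      ring
    linarith
  set K : ℕ := (Finset.univ.filter (fun z => g z ≠ 0)).card with hKdef
  have hlamlt : ∀ z, g z ≠ 0 → lam < h z := by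
    intro z hz
    by_contra hcon
    push_neg at hcon
    exact hz (max_eq_right (by linarith))
  have hKlam : (K:ℝ) * lam ≤ m := by
    have e1 : (K:ℝ) * lam = ∑ z ∈ Finset.univ.filter (fun z => g z ≠ 0), lam := by
      rw [Finset.sum_const, nsmul_eq_mul, hKdef]
    have e2 : ∑ z ∈ Finset.univ.filter (fun z => g z ≠ 0), lam
        ≤ ∑ z ∈ Finset.univ.filter (fun z => g z ≠ 0), dd G z * h z := by
      refine Finset.sum_le_sum fun z hz => ?_
      have hlz := hlamlt z (Finset.mem_filter.mp hz).2
      have := one_le_dd G hd z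
      nlinarith [hh z]
    have e3 : ∑ z ∈ Finset.univ.filter (fun z => g z ≠ 0), dd G z * h z
        ≤ ∑ z, dd G z * h z := by
      refine Finset.sum_le_sum_of_subset_of_nonneg (Finset.filter_subset _ _) fun z _ _ => ?_
      have := dd_pos G hd z
      have := hh z
      positivity
    rw [e1, hm]
    exact le_trans e2 e3
  have h4m : (0:ℝ) < 4*m := by positivity
  have hKv : (K:ℝ) * v ≤ 4 * m^2 := by
    have hh1 : (K:ℝ) * (v / (4*m)) ≤ m := hKlam
    calc (K:ℝ) * v = ((K:ℝ) * (v/(4*m))) * (4*m) := by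
          rw [mul_assoc, div_mul_cancel₀ v h4m.ne']
      _ ≤ m * (4*m) := by nlinarith [hm0]
      _ = 4*m^2 := by ring
  have hz₀ : ∃ z₀, g z₀ = 0 := by
    by_contra hno
    push_neg at hno
    have e1 : (Fintype.card V : ℝ) * lam ≤ m := by
      have : ∑ (z : V), lam ≤ ∑ z, dd G z * h z := by
        refine Finset.sum_le_sum fun z _ => ?_
        have hlz := hlamlt z (hno z)
        have := one_le_dd G hd z
        nlinarith [hh z]
      rw [hm]
      calc (Fintype.card V : ℝ) * lam = ∑ (z : V), lam := by
            rw [Finset.sum_const, nsmul_eq_mul, Finset.card_univ]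
        _ ≤ ∑ z, dd G z * h z := this
    -- n * v/(4m) ≤ m  ⇒ n v ≤ 4 m² ≤ 4Δ ⇒ v ≤ 4Δ/n, contradiction
    have e2 : (Fintype.card V : ℝ) * v ≤ 4 * (Δ:ℝ) := by
      have : (Fintype.card V : ℝ) * v = ((Fintype.card V : ℝ) * lam) * (4*m) := by
        rw [hlamdef, mul_assoc, div_mul_cancel₀ v h4m.ne']
      rw [this]
      nlinarith [hm0]
    rw [div_lt_iff₀ hn] at hbig
    nlinarith
  obtain ⟨z₀, hz₀⟩ := hz₀
  have hwb : ∀ a, (g a)^2 ≤ (K:ℝ) * Ed G g := fun a => walk_bound G hconn g hg0 hz₀ a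
  have hEg : Ed G g ≤ Ed G h := by
    unfold Ed
    refine Finset.sum_le_sum fun z _ => Finset.sum_le_sum fun u _ => ?_
    by_cases ha : G.Adj z u
    · rw [if_pos ha, if_pos ha]
      have habs : |g z - g u| ≤ |h z - h u| := by
        have := abs_max_sub_max_le_abs (h z - lam) (h u - lam) 0
        simpa [sub_sub_sub_cancel_right] using this
      calc (g z - g u)^2 = |g z - g u|^2 := (sq_abs _).symm
        _ ≤ |h z - h u|^2 := by
            exact pow_le_pow_left₀ (abs_nonneg _) habs 2
        _ = (h z - h u)^2 := sq_abs _
    · rw [if_neg ha, if_neg ha]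
  have hmain : v/2 ≤ (Δ:ℝ) * ((K:ℝ)^2 * Ed G g) := by
    have s1 : ∑ z, dd G z * (g z)^2 ≤ (Δ:ℝ) * ∑ z, (g z)^2 := by
      rw [Finset.mul_sum]
      refine Finset.sum_le_sum fun z _ => ?_
      have h1 : dd G z ≤ (Δ:ℝ) := by
        rw [dd]
        exact_mod_cast hΔ z
      nlinarith [sq_nonneg (g z), dd_pos G hd z]
    have s2 : ∑ z, (g z)^2 = ∑ z ∈ Finset.univ.filter (fun z => g z ≠ 0), (g z)^2 := by
      symm
      refine Finset.sum_filter_of_ne fun z _ hne => ?_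
      intro hgz
      rw [hgz] at hne
      simp at hne
    have s3 : ∑ z ∈ Finset.univ.filter (fun z => g z ≠ 0), (g z)^2
        ≤ (K:ℝ) * ((K:ℝ) * Ed G g) := by
      calc ∑ z ∈ Finset.univ.filter (fun z => g z ≠ 0), (g z)^2
          ≤ ∑ z ∈ Finset.univ.filter (fun z => g z ≠ 0), (K:ℝ) * Ed G g :=
            Finset.sum_le_sum fun z _ => hwb z
        _ = (K:ℝ) * ((K:ℝ) * Ed G g) := by
            rw [Finset.sum_const, nsmul_eq_mul, hKdef]
    calc v/2 ≤ ∑ z, dd G z * (g z)^2 := hb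
      _ ≤ (Δ:ℝ) * ∑ z, (g z)^2 := s1
      _ = (Δ:ℝ) * ∑ z ∈ Finset.univ.filter (fun z => g z ≠ 0), (g z)^2 := by rw [s2]
      _ ≤ (Δ:ℝ) * ((K:ℝ) * ((K:ℝ) * Ed G g)) := by
          refine mul_le_mul_of_nonneg_left s3 (by positivity)
      _ = (Δ:ℝ) * ((K:ℝ)^2 * Ed G g) := by ring
  have hEdg0 : 0 ≤ Ed G g := Ed_nonneg G g
  have hEdh0 : 0 ≤ Ed G h := Ed_nonneg G h
  have hK0 : (0:ℝ) ≤ (K:ℝ) := Nat.cast_nonneg K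
  -- v/2 * v^2 ≤ Δ K² Ed g * v² ≤ Δ (16 m⁴) Ed g ≤ 16 Δ m⁴ Ed h
  have hK2v2 : (K:ℝ)^2 * v^2 ≤ 16 * m^4 := by
    nlinarith [mul_self_le_mul_self (by positivity : (0:ℝ) ≤ (K:ℝ)*v) hKv]
  have step : v^3/2 ≤ (Δ:ℝ) * (16 * m^4) * Ed G g := by
    have h1 : v/2 * v^2 ≤ (Δ:ℝ) * ((K:ℝ)^2 * Ed G g) * v^2 :=
      mul_le_mul_of_nonneg_right hmain (sq_nonneg v)
    have h2 : (Δ:ℝ) * ((K:ℝ)^2 * Ed G g) * v^2 = (Δ:ℝ) * Ed G g * ((K:ℝ)^2 * v^2) := by ring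
    have h3 : (Δ:ℝ) * Ed G g * ((K:ℝ)^2 * v^2) ≤ (Δ:ℝ) * Ed G g * (16 * m^4) := by
      refine mul_le_mul_of_nonneg_left hK2v2 (by positivity)
    calc v^3/2 = v/2 * v^2 := by ring
      _ ≤ (Δ:ℝ) * ((K:ℝ)^2 * Ed G g) * v^2 := h1
      _ = (Δ:ℝ) * Ed G g * ((K:ℝ)^2 * v^2) := h2
      _ ≤ (Δ:ℝ) * Ed G g * (16 * m^4) := h3
      _ = (Δ:ℝ) * (16 * m^4) * Ed G g := by ring
  have hfin : (Δ:ℝ) * (16 * m^4) * Ed G g ≤ (Δ:ℝ) * (16*m^4) * Ed G h := by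
    refine mul_le_mul_of_nonneg_left hEg (by positivity)
  nlinarith [step, hfin]

-- squared-norm written with weights
lemma vv_weighted (x : V) (t : ℕ) :
    vv G x t = ∑ z, dd G z * (wv G x t z / Real.sqrt (dd G z))^2 := by
  unfold vv
  refine Finset.sum_congr rfl fun z _ => ?_
  rw [div_pow, Real.sq_sqrt (dd_pos G hd z).le, mul_comm,
    div_mul_cancel₀ _ (dd_pos G hd z).ne']

lemma mass_weighted (x : V) (t : ℕ) :
    ∑ z, dd G z * (wv G x t z / Real.sqrt (dd G z)) = Real.sqrt (dd G x) := by
  rw [← mass G hd x t]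
  refine Finset.sum_congr rfl fun z _ => ?_
  calc dd G z * (wv G x t z / Real.sqrt (dd G z))
      = (dd G z / Real.sqrt (dd G z)) * wv G x t z := by ring
    _ = Real.sqrt (dd G z) * wv G x t z := by rw [Real.div_sqrt]

omit hd in
/-- abstract iteration lemma -/
lemma recursion (v : ℕ → ℝ) (hpos : ∀ t, 0 < v t) (hmono : ∀ t, v (t+1) ≤ v t)
    (b c₀ : ℝ) (hc : 0 < c₀)
    (hstep : ∀ t, b < v t → c₀ * (v t)^3 ≤ v t - v (t+1)) :
    ∀ t : ℕ, v t ≤ b ∨ c₀ * t ≤ ((v t)^2)⁻¹ := by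
  intro t
  induction t with
  | zero =>
    right
    simp only [Nat.cast_zero, mul_zero]
    positivity
  | succ t ih =>
    rcases ih with hb | hrec
    · left
      exact le_trans (hmono t) hb
    · by_cases hbt : v t ≤ b
      · left
        exact le_trans (hmono t) hbt
      · push_neg at hbt
        right
        have hst := hstep t hbt
        have hvt := hpos t
        have hvt1 := hpos (t+1)
        have h4 : c₀ * ((v t)^2 * (v (t+1))^2) ≤ (v t)^2 - (v (t+1))^2 := by
          have hvv : (0:ℝ) ≤ v t + v (t+1) := by linarith
          have k1 : c₀ * (v t)^3 * (v t + v (t+1)) ≤ (v t)^2 - (v (t+1))^2 := by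
            nlinarith [mul_le_mul_of_nonneg_right hst hvv]
          have hvsq : (v (t+1))^2 ≤ (v t)^2 := by nlinarith [hmono t]
          have k2 : c₀ * ((v t)^2 * (v (t+1))^2) ≤ c₀ * (v t)^3 * (v t + v (t+1)) := by
            nlinarith [mul_le_mul_of_nonneg_left hvsq (mul_nonneg hc.le (sq_nonneg (v t))),
              mul_nonneg (mul_nonneg hc.le (pow_pos hvt 3).le) hvt1.le]
          linarith
        have hr : c₀ * t * (v t)^2 ≤ 1 := by
          rw [← one_div] at hrec
          have := (le_div_iff₀ (by positivity : (0:ℝ) < (v t)^2)).mp hrec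
          linarith
        have target2 : (c₀ * ((t:ℝ)+1)) * ((v (t+1))^2 * (v t)^2) ≤ (v t)^2 := by
          nlinarith [h4, mul_le_mul_of_nonneg_right hr (sq_nonneg (v (t+1)))]
        have target3 : (c₀ * ((t:ℝ)+1)) * (v (t+1))^2 ≤ 1 := by
          have hv2t : (0:ℝ) < (v t)^2 := by positivity
          nlinarith [target2]
        push_cast
        rw [← one_div, le_div_iff₀ (by positivity : (0:ℝ) < (v (t+1))^2)]
        exact target3

/-- decay of vv -/
lemma vv_decay (hconn : G.Preconnected) {Δ : ℕ} (hΔ1 : 1 ≤ (Δ:ℝ))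
    (hΔ : ∀ x, G.degree x ≤ Δ) (hcard : 0 < Fintype.card V) (x : V) :
    ∀ t : ℕ, 1 ≤ t →
      vv G x t ≤ 4*(Δ:ℝ)/(Fintype.card V : ℝ) + Real.sqrt (128*(Δ:ℝ)^3/t) := by
  have hmono : ∀ t, vv G x (t+1) ≤ vv G x t := by
    intro t
    have h1 := dirichlet_step G hd x t
    have h2 := Ed_nonneg G (fun z => wv G x t z / Real.sqrt (dd G z))
    linarith
  have hstep : ∀ t, 4*(Δ:ℝ)/(Fintype.card V : ℝ) < vv G x t →
      (128*(Δ:ℝ)^3)⁻¹ * (vv G x t)^3 ≤ vv G x t - vv G x (t+1) := by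
    intro t hbig
    set h : V → ℝ := fun z => wv G x t z / Real.sqrt (dd G z) with hhdef
    have hh0 : ∀ z, 0 ≤ h z := fun z =>
      div_nonneg (SS_pow_nonneg G hd t x z) (Real.sqrt_nonneg _)
    have hm : Real.sqrt (dd G x) = ∑ z, dd G z * h z := (mass_weighted G hd x t).symm
    have hm1 : 1 ≤ Real.sqrt (dd G x) := one_le_sqrt_dd G hd x
    have hmΔ : (Real.sqrt (dd G x))^2 ≤ (Δ:ℝ) := by
      rw [Real.sq_sqrt (dd_pos G hd x).le, dd]
      exact_mod_cast hΔ x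
    have hv : vv G x t = ∑ z, dd G z * (h z)^2 := vv_weighted G hd x t
    have hnash := nash G hd hconn hΔ1 hΔ hcard h hh0 hm hm1 hmΔ hv hbig
    have hdir := dirichlet_step G hd x t
    have hm4 : (Real.sqrt (dd G x))^4 ≤ (Δ:ℝ)^2 := by
      calc (Real.sqrt (dd G x))^4 = ((Real.sqrt (dd G x))^2)^2 := by ring
        _ ≤ (Δ:ℝ)^2 := by nlinarith [Real.sqrt_nonneg (dd G x)]
    have hEd0 := Ed_nonneg G h
    have h32 : (vv G x t)^3 ≤ 32*(Δ:ℝ)^3 * Ed G h := by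
      calc (vv G x t)^3 ≤ 32 * (Δ:ℝ) * (Real.sqrt (dd G x))^4 * Ed G h := hnash
        _ ≤ 32*(Δ:ℝ)^3 * Ed G h := by
          nlinarith [mul_le_mul_of_nonneg_right
            (mul_le_mul_of_nonneg_left hm4 (by positivity : (0:ℝ) ≤ 32*(Δ:ℝ))) hEd0]
    have e1 : (128*(Δ:ℝ)^3)⁻¹ * (vv G x t)^3
        ≤ (128*(Δ:ℝ)^3)⁻¹ * (32*(Δ:ℝ)^3 * Ed G h) :=
      mul_le_mul_of_nonneg_left h32 (by positivity)
    have e2 : (128*(Δ:ℝ)^3)⁻¹ * (32*(Δ:ℝ)^3 * Ed G h) = Ed G h / 4 := by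
      have : (Δ:ℝ) ≠ 0 := by positivity
      field_simp
      ring
    linarith
  intro t ht
  have hrec := recursion (vv G x) (fun s => vv_pos G hd x s) hmono
    (4*(Δ:ℝ)/(Fintype.card V : ℝ)) ((128*(Δ:ℝ)^3)⁻¹) (by positivity) hstep t
  have hsq0 : 0 ≤ Real.sqrt (128*(Δ:ℝ)^3/t) := Real.sqrt_nonneg _
  have hn : (0:ℝ) < (Fintype.card V : ℝ) := by exact_mod_cast hcard
  rcases hrec with hb | hc
  · have : (0:ℝ) ≤ 4*(Δ:ℝ)/(Fintype.card V : ℝ) := by positivity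
    linarith
  · have ht0 : (0:ℝ) < (t:ℝ) := by exact_mod_cast ht
    have hct : (0:ℝ) < (128*(Δ:ℝ)^3)⁻¹ * (t:ℝ) := by positivity
    have h2 : (vv G x t)^2 ≤ ((128*(Δ:ℝ)^3)⁻¹ * (t:ℝ))⁻¹ := by
      have := inv_anti₀ hct hc
      rwa [inv_inv] at this
    have h3 : ((128*(Δ:ℝ)^3)⁻¹ * (t:ℝ))⁻¹ = 128*(Δ:ℝ)^3/t := by
      rw [mul_inv, inv_inv, div_eq_mul_inv]
    have h4 : vv G x t ≤ Real.sqrt (128*(Δ:ℝ)^3/t) := by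
      rw [Real.le_sqrt (vv_pos G hd x t).le (by positivity)]
      rw [← h3]
      exact h2
    have : (0:ℝ) ≤ 4*(Δ:ℝ)/(Fintype.card V : ℝ) := by positivity
    linarith

/-- Cauchy–Schwarz splitting of the symmetric kernel -/
lemma cross (x y : V) (s s' : ℕ) (hss : s ≤ s') (B : ℝ)
    (hx : vv G x s ≤ B) (hy : vv G y s ≤ B)
    (hmono : ∀ q : V, ∀ a b : ℕ, a ≤ b → vv G q b ≤ vv G q a) :
    (SS G ^ (s + s')) x y ≤ B := by
  have hB0 : (0:ℝ) ≤ B := le_trans (vv_pos G hd x s).le hx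
  have hy' : vv G y s' ≤ B := le_trans (hmono y s s' hss) hy
  have hexp : (SS G ^ (s + s')) x y = ∑ z, wv G x s z * wv G y s' z := by
    rw [pow_add, Matrix.mul_apply]
    refine Finset.sum_congr rfl fun z _ => ?_
    rw [SS_pow_symm G s' z y]
    rfl
  have hcs2 : (∑ z, wv G x s z * wv G y s' z)^2 ≤ vv G x s * vv G y s' :=
    Finset.sum_mul_sq_le_sq_mul_sq Finset.univ _ _
  have hpos : 0 ≤ ∑ z, wv G x s z * wv G y s' z :=
    Finset.sum_nonneg fun z _ => mul_nonneg (SS_pow_nonneg G hd s x z) (SS_pow_nonneg G hd s' y z)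
  have hBB : vv G x s * vv G y s' ≤ B^2 := by
    nlinarith [vv_pos G hd x s, vv_pos G hd y s']
  rw [hexp]
  nlinarith [hcs2, hpos, hBB]

omit hd in
lemma degree_one_of_conn (hconn : G.Connected) (hcard : 2 ≤ Fintype.card V) :
    ∀ v : V, 1 ≤ G.degree v := by
  intro v
  obtain ⟨u, hu⟩ := Fintype.exists_ne_of_one_lt_card (by omega) v
  obtain ⟨p⟩ := hconn.preconnected v u
  cases p with
  | nil => exact absurd rfl hu
  | cons h q => exact (G.degree_pos_iff_exists_adj v).mpr ⟨_, h⟩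

end basic2
end Stmt7Aux

/-- Uniform heat-kernel upper bound `P_lazy^t(x,y) ≤ c/√t` for `t < A·n²`
on bounded-degree connected graphs. -/
theorem stmt7 (Δ : ℕ) (A : ℝ) (hA : 0 < A) :
    ∃ c : ℝ, 0 < c ∧
      ∀ (V : Type) [Fintype V] [DecidableEq V] (G : SimpleGraph V) [DecidableRel G.Adj],
        G.Connected → (∀ x, G.degree x ≤ Δ) →
        ∀ (x y : V) (t : ℕ), 1 ≤ t → (t : ℝ) < A * (Fintype.card V : ℝ) ^ 2 →
          ((lazyMatrix (srwMatrix G)) ^ t) x y ≤ c / Real.sqrt t := by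
  classical
  have hΔ0 : (0:ℝ) ≤ (Δ:ℝ) := Nat.cast_nonneg Δ
  have hsA0 : (0:ℝ) ≤ Real.sqrt A := Real.sqrt_nonneg A
  refine ⟨25*((Δ:ℝ)+1)^3*(Real.sqrt A + 1), by positivity, ?_⟩
  intro V _ _ G _ hconn hΔ x y t ht htA
  have hc1 : (1:ℝ) ≤ ((Δ:ℝ)+1)^3 := by
    calc (1:ℝ) = 1^3 := by norm_num
      _ ≤ ((Δ:ℝ)+1)^3 := pow_le_pow_left₀ (by norm_num) (by linarith) 3
  have hc25 : (25:ℝ) ≤ 25*((Δ:ℝ)+1)^3*(Real.sqrt A + 1) := by nlinarith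
  have hcardpos : 0 < Fintype.card V := Fintype.card_pos_iff.mpr ⟨x⟩
  have htR : (0:ℝ) < (t:ℝ) := by exact_mod_cast ht
  have hst0 : (0:ℝ) < Real.sqrt t := Real.sqrt_pos.mpr htR
  by_cases hcard1 : Fintype.card V = 1
  · -- single-vertex graph
    have hall : ∀ a b : V, a = b := fun a b => Fintype.card_le_one_iff.mp hcard1.le a b
    have hsrw : srwMatrix G = 0 := by
      ext a b
      have hab : a = b := hall a b
      subst hab
      simp [srwMatrix]
    have hL : lazyMatrix (srwMatrix G) = (2:ℝ)⁻¹ • (1 : Matrix V V ℝ) := by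
      rw [lazyMatrix, hsrw, add_zero]
    have hentry : ((lazyMatrix (srwMatrix G)) ^ t) x y ≤ 1 := by
      rw [hL, smul_pow, one_pow, Matrix.smul_apply, Matrix.one_apply]
      have h1 : ((2:ℝ)⁻¹)^t ≤ 1 := pow_le_one₀ (by norm_num) (by norm_num)
      have h2 : (0:ℝ) ≤ ((2:ℝ)⁻¹)^t := by positivity
      split
      · simpa using h1
      · simpa using h2
    have hAt : Real.sqrt t ≤ Real.sqrt A := by
      apply Real.sqrt_le_sqrt
      rw [hcard1] at htA
      push_cast at htA
      linarith
    have : (1:ℝ) ≤ 25*((Δ:ℝ)+1)^3*(Real.sqrt A + 1) / Real.sqrt t := by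
      rw [le_div_iff₀ hst0, one_mul]
      calc Real.sqrt t ≤ Real.sqrt A := hAt
        _ ≤ 25*((Δ:ℝ)+1)^3*(Real.sqrt A + 1) := by nlinarith
    linarith
  · -- main case
    have hcard2 : 2 ≤ Fintype.card V := by omega
    have hd : ∀ v : V, 1 ≤ G.degree v := Stmt7Aux.degree_one_of_conn G hconn hcard2
    have hΔ1 : (1:ℝ) ≤ (Δ:ℝ) := by exact_mod_cast le_trans (hd x) (hΔ x)
    have hnR : (0:ℝ) < (Fintype.card V : ℝ) := by exact_mod_cast hcardpos
    by_cases ht1 : t = 1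
    · subst ht1
      have hentry : ((lazyMatrix (srwMatrix G)) ^ 1) x y ≤ 1 := by
        rw [pow_one, Stmt7Aux.lazy_apply]
        have h1 : (if x = y then (1:ℝ) else 0) ≤ 1 := by split <;> norm_num
        have h2 : (if G.Adj x y then (Stmt7Aux.dd G x)⁻¹ else 0) ≤ 1 := by
          split
          · exact inv_le_one_of_one_le₀ (Stmt7Aux.one_le_dd G hd x)
          · norm_num
        linarith
      have : (1:ℝ) ≤ 25*((Δ:ℝ)+1)^3*(Real.sqrt A + 1) / Real.sqrt 1 := by
        rw [Real.sqrt_one, div_one]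
        linarith
      push_cast
      linarith [this]
    · have ht2 : 2 ≤ t := by omega
      set s : ℕ := t/2 with hs
      set s' : ℕ := t - s with hs'
      have hs1 : 1 ≤ s := by omega
      have hss : s ≤ s' := by omega
      have hsum : s + s' = t := by omega
      have h4s : t ≤ 4*s := by omega
      have hsR : (0:ℝ) < (s:ℝ) := by exact_mod_cast hs1
      have hmono : ∀ q : V, ∀ a b : ℕ, a ≤ b → Stmt7Aux.vv G q b ≤ Stmt7Aux.vv G q a := by
        intro q a b hab
        have := antitone_nat_of_succ_le (f := Stmt7Aux.vv G q) (fun n => by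
          have h1 := Stmt7Aux.dirichlet_step G hd q n
          have h2 := Stmt7Aux.Ed_nonneg G
            (fun z => Stmt7Aux.wv G q n z / Real.sqrt (Stmt7Aux.dd G z))
          linarith)
        exact this hab
      set B : ℝ := 4*(Δ:ℝ)/(Fintype.card V : ℝ) + Real.sqrt (128*(Δ:ℝ)^3/s) with hB
      have hvx := Stmt7Aux.vv_decay G hd hconn.preconnected hΔ1 hΔ hcardpos x s hs1
      have hvy := Stmt7Aux.vv_decay G hd hconn.preconnected hΔ1 hΔ hcardpos y s hs1
      have hSS : (Stmt7Aux.SS G ^ t) x y ≤ B := by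
        rw [← hsum]
        exact Stmt7Aux.cross G hd x y s s' hss B hvx hvy hmono
      -- pass to lazy matrix
      have hL1 : ((lazyMatrix (srwMatrix G))^t) x y ≤ Real.sqrt (Δ:ℝ) * (Stmt7Aux.SS G ^t) x y := by
        have hconj := Stmt7Aux.conj G hd t x y
        have hLpos := Stmt7Aux.lazy_pow_nonneg G t x y
        have hSpos := Stmt7Aux.SS_pow_nonneg G hd t x y
        have h1x := Stmt7Aux.one_le_sqrt_dd G hd x
        have hdyΔ : Real.sqrt (Stmt7Aux.dd G y) ≤ Real.sqrt (Δ:ℝ) := by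
          apply Real.sqrt_le_sqrt
          rw [Stmt7Aux.dd]
          exact_mod_cast hΔ y
        nlinarith [mul_nonneg (sub_nonneg.mpr h1x) hLpos,
          mul_le_mul_of_nonneg_left hdyΔ hSpos]
      have hSB : Real.sqrt (Δ:ℝ) * (Stmt7Aux.SS G ^t) x y ≤ Real.sqrt (Δ:ℝ) * B := by
        apply mul_le_mul_of_nonneg_left hSS (Real.sqrt_nonneg _)
      -- numeric estimates
      have hΔΔ : Real.sqrt (Δ:ℝ) ≤ (Δ:ℝ) := by
        calc Real.sqrt (Δ:ℝ) ≤ Real.sqrt ((Δ:ℝ)^2) := Real.sqrt_le_sqrt (by nlinarith)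
          _ = (Δ:ℝ) := Real.sqrt_sq hΔ0
      have hsqA : Real.sqrt t ≤ Real.sqrt A * (Fintype.card V : ℝ) := by
        calc Real.sqrt t ≤ Real.sqrt (A * (Fintype.card V : ℝ)^2) := Real.sqrt_le_sqrt htA.le
          _ = Real.sqrt A * (Fintype.card V : ℝ) := by
            rw [Real.sqrt_mul hA.le, Real.sqrt_sq hnR.le]
      have piece1 : Real.sqrt (Δ:ℝ) * (4*(Δ:ℝ)/(Fintype.card V : ℝ))
          ≤ 4*(Δ:ℝ)^2*Real.sqrt A/Real.sqrt t := by
        rw [mul_div_assoc']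
        rw [div_le_div_iff₀ hnR hst0]
        -- √Δ*4Δ*√t ≤ 4Δ²√A*n
        have e1 : Real.sqrt (Δ:ℝ) * (4*(Δ:ℝ)) * Real.sqrt t ≤ (Δ:ℝ) * (4*(Δ:ℝ)) * (Real.sqrt A * (Fintype.card V : ℝ)) := by
          have r1 : Real.sqrt (Δ:ℝ) * (4*(Δ:ℝ)) ≤ (Δ:ℝ) * (4*(Δ:ℝ)) := by nlinarith
          have r2 : (0:ℝ) ≤ Real.sqrt (Δ:ℝ) * (4*(Δ:ℝ)) := by positivity
          calc Real.sqrt (Δ:ℝ) * (4*(Δ:ℝ)) * Real.sqrt t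
              ≤ Real.sqrt (Δ:ℝ) * (4*(Δ:ℝ)) * (Real.sqrt A * (Fintype.card V : ℝ)) :=
                mul_le_mul_of_nonneg_left hsqA r2
            _ ≤ (Δ:ℝ) * (4*(Δ:ℝ)) * (Real.sqrt A * (Fintype.card V : ℝ)) := by
                apply mul_le_mul_of_nonneg_right r1 (by positivity)
        calc Real.sqrt (Δ:ℝ) * (4*(Δ:ℝ)) * Real.sqrt t
            ≤ (Δ:ℝ) * (4*(Δ:ℝ)) * (Real.sqrt A * (Fintype.card V : ℝ)) := e1
          _ = 4*(Δ:ℝ)^2*Real.sqrt A * (Fintype.card V : ℝ) := by ring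
      have piece2 : Real.sqrt (Δ:ℝ) * Real.sqrt (128*(Δ:ℝ)^3/s) ≤ 23*(Δ:ℝ)^2/Real.sqrt t := by
        have e1 : Real.sqrt (Δ:ℝ) * Real.sqrt (128*(Δ:ℝ)^3/s) = Real.sqrt ((Δ:ℝ) * (128*(Δ:ℝ)^3/s)) :=
          (Real.sqrt_mul hΔ0 _).symm
        have e2 : (Δ:ℝ) * (128*(Δ:ℝ)^3/s) = 128*(Δ:ℝ)^4/s := by ring
        have e3 : (128:ℝ)*(Δ:ℝ)^4/s ≤ 529*(Δ:ℝ)^4/t := by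
          rw [div_le_div_iff₀ hsR htR]
          have h4sR : (t:ℝ) ≤ 4*(s:ℝ) := by exact_mod_cast h4s
          nlinarith [pow_nonneg hΔ0 4]
        have e4 : Real.sqrt ((529:ℝ)*(Δ:ℝ)^4/t) = 23*(Δ:ℝ)^2/Real.sqrt t := by
          rw [show (529:ℝ)*(Δ:ℝ)^4/t = (23*(Δ:ℝ)^2/Real.sqrt t)^2 from by
            rw [div_pow]
            rw [Real.sq_sqrt htR.le]
            ring_nf]
          exact Real.sqrt_sq (by positivity)
        rw [e1, e2]
        calc Real.sqrt ((128:ℝ)*(Δ:ℝ)^4/s) ≤ Real.sqrt ((529:ℝ)*(Δ:ℝ)^4/t) := Real.sqrt_le_sqrt e3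
          _ = 23*(Δ:ℝ)^2/Real.sqrt t := e4
      have hnum : 4*(Δ:ℝ)^2*Real.sqrt A + 23*(Δ:ℝ)^2 ≤ 25*((Δ:ℝ)+1)^3*(Real.sqrt A + 1) := by
        have hcube : (Δ:ℝ)^2 ≤ ((Δ:ℝ)+1)^3 := by nlinarith
        nlinarith [mul_le_mul_of_nonneg_right hcube hsA0]
      calc ((lazyMatrix (srwMatrix G))^t) x y
          ≤ Real.sqrt (Δ:ℝ) * (Stmt7Aux.SS G ^t) x y := hL1
        _ ≤ Real.sqrt (Δ:ℝ) * B := hSB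
        _ = Real.sqrt (Δ:ℝ) * (4*(Δ:ℝ)/(Fintype.card V : ℝ)) + Real.sqrt (Δ:ℝ) * Real.sqrt (128*(Δ:ℝ)^3/s) := by
            rw [hB]; ring
        _ ≤ 4*(Δ:ℝ)^2*Real.sqrt A/Real.sqrt t + 23*(Δ:ℝ)^2/Real.sqrt t := add_le_add piece1 piece2
        _ = (4*(Δ:ℝ)^2*Real.sqrt A + 23*(Δ:ℝ)^2)/Real.sqrt t := by rw [← add_div]
        _ ≤ 25*((Δ:ℝ)+1)^3*(Real.sqrt A + 1) / Real.sqrt t := by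
            gcongr
end
end

section
/- For any constants c₁, c₂ > 0 there exist constants c₃, c₄ > 0 with the following property. Let K be a finite connected simple graph such that for every vertex v of K and every integer t with 1 ≤ t ≤ c₁·|V(K)|, the simple random walk Y on K started at v satisfies E_v[|{Y_0, Y_1, …, Y_t}|] ≥ c₂·t. Then the lamplighter graph G over K satisfies: for every vertex x of G and every integer t with 1 ≤ t ≤ c₃·log|V(G)|, the entropy of the simple random walk on G started at x satisfies H(X_t) ≥ c₄·t. -/
open Filter

noncomputable section

/-- Entropy of a probability vector. -/
noncomputable def entropy {V : Type*} [Fintype V] (p : V → ℝ) : ℝ :=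
  ∑ y, Real.negMulLog (p y)

/-- The lamplighter graph over a base graph `K`: vertices are pairs (lamp configuration,
position of the lamplighter), and a step moves along an edge of `K` while arbitrarily
updating the lamps at the two endpoints. -/
def lamplighter {V : Type*} (K : SimpleGraph V) : SimpleGraph ((V → Bool) × V) where
  Adj x y := K.Adj x.2 y.2 ∧ ∀ w, w ≠ x.2 → w ≠ y.2 → x.1 w = y.1 w
  symm := ⟨fun x y h => ⟨h.1.symm, fun w hw1 hw2 => (h.2 w hw2 hw1).symm⟩⟩
  loopless := ⟨fun x h => K.loopless.irrefl x.2 h.1⟩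

instance {V : Type*} [Fintype V] [DecidableEq V] (K : SimpleGraph V) [DecidableRel K.Adj] :
    DecidableRel (lamplighter K).Adj := fun x y =>
  inferInstanceAs (Decidable (K.Adj x.2 y.2 ∧ ∀ w, w ≠ x.2 → w ≠ y.2 → x.1 w = y.1 w))

section Aux

variable {V : Type} [Fintype V] [DecidableEq V]

/-- counting lamp configurations agreeing with `g` off `S`. -/
lemma card_compat (S : Finset V) (g : V → Bool) :
    (Finset.univ.filter (fun σ : V → Bool => ∀ u ∉ S, σ u = g u)).card = 2 ^ S.card := by
  classical
  have : (Finset.univ : Finset (↥S → Bool)).card = 2 ^ S.card := by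
    simp [Finset.card_univ, Fintype.card_fun]
  rw [← this]
  refine Finset.card_bij' (fun σ _ => fun u => σ u.1) (fun h _ => fun u => if hu : u ∈ S then h ⟨u, hu⟩ else g u) ?_ ?_ ?_ ?_
  · intro a _; exact Finset.mem_univ _
  · intro h _
    simp only [Finset.mem_filter, Finset.mem_univ, true_and]
    intro u hu
    simp [hu]
  · intro σ hσ
    simp only [Finset.mem_filter, Finset.mem_univ, true_and] at hσ
    funext u
    by_cases hu : u ∈ S
    · simp [hu]
    · simp [hu, hσ u hu]
  · intro h _
    funext u
    simp [u.2]

lemma lamplighter_degree (K : SimpleGraph V) [DecidableRel K.Adj] (x : (V → Bool) × V) :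
    (lamplighter K).degree x = 4 * K.degree x.2 := by
  classical
  rw [← SimpleGraph.card_neighborFinset_eq_degree]
  have hnb : (lamplighter K).neighborFinset x
      = Finset.univ.filter (fun z => (lamplighter K).Adj x z) := by
    ext z; simp [SimpleGraph.mem_neighborFinset]
  rw [hnb, Finset.card_eq_sum_card_fiberwise (f := Prod.snd) (t := Finset.univ)
    (fun z _ => Finset.mem_univ _)]
  have hfib : ∀ v : V, (Finset.univ.filter (fun z => (lamplighter K).Adj x z)
      |>.filter (fun z => z.2 = v)).card = if K.Adj x.2 v then 4 else 0 := by
    intro v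
    by_cases hv : K.Adj x.2 v
    · rw [if_pos hv]
      have h4 : (4 : ℕ) = 2 ^ ({x.2, v} : Finset V).card := by
        rw [Finset.card_insert_of_notMem (by simp [hv.ne]), Finset.card_singleton]
        norm_num
      rw [h4, ← card_compat ({x.2, v} : Finset V) x.1]
      refine Finset.card_bij' (fun z _ => z.1) (fun σ _ => (σ, v)) ?_ ?_ ?_ ?_
      · intro z hz
        simp only [Finset.mem_filter, Finset.mem_univ, true_and] at hz ⊢
        obtain ⟨⟨_, hcomp⟩, hz2⟩ := hz
        intro u hu
        simp only [Finset.mem_insert, Finset.mem_singleton, not_or] at hu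
        exact (hcomp u hu.1 (hz2 ▸ hu.2)).symm
      · intro σ hσ
        simp only [Finset.mem_filter, Finset.mem_univ, true_and] at hσ ⊢
        exact ⟨⟨hv, fun w hw1 hw2 => (hσ w (by simp [hw1, hw2])).symm⟩, trivial⟩
      · intro z hz
        simp only [Finset.mem_filter, Finset.mem_univ, true_and] at hz
        exact Prod.ext rfl hz.2.symm
      · intro σ _; rfl
    · rw [if_neg hv]
      rw [Finset.card_eq_zero]
      ext z
      simp only [Finset.mem_filter, Finset.mem_univ, true_and, Finset.notMem_empty, iff_false]
      rintro ⟨⟨hadj, _⟩, rfl⟩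
      exact hv hadj
  rw [Finset.sum_congr rfl (fun v _ => hfib v)]
  rw [Finset.sum_ite, Finset.sum_const_zero, add_zero, Finset.sum_const, smul_eq_mul]
  rw [mul_comm]
  congr 1
  rw [← SimpleGraph.card_neighborFinset_eq_degree]
  congr 1
  ext v; simp [SimpleGraph.mem_neighborFinset]

/-- The conditional lamp distribution given the range `S` and position `v`. -/
noncomputable def qdist (x : (V → Bool) × V) (S : Finset V) (v : V) : ((V → Bool) × V) → ℝ :=
  fun z => if z.2 = v ∧ ∀ u ∉ S, z.1 u = x.1 u then ((2 : ℝ) ^ S.card)⁻¹ else 0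

lemma step_kernel (K : SimpleGraph V) [DecidableRel K.Adj] (x : (V → Bool) × V)
    (S : Finset V) (a : V) (ha : a ∈ S) (z : (V → Bool) × V) :
    ∑ z' : (V → Bool) × V, qdist x S a z' * srwMatrix (lamplighter K) z' z
      = srwMatrix K a z.2 * qdist x (insert z.2 S) z.2 z := by
  classical
  rw [Fintype.sum_prod_type]
  have hred : ∀ σ : V → Bool,
      (∑ v : V, qdist x S a (σ, v) * srwMatrix (lamplighter K) (σ, v) z)
      = (if ∀ u ∉ S, σ u = x.1 u then
          ((2 : ℝ) ^ S.card)⁻¹ * srwMatrix (lamplighter K) (σ, a) z else 0) := by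
    intro σ
    rw [Finset.sum_eq_single a]
    · unfold qdist
      by_cases h : ∀ u ∉ S, σ u = x.1 u <;> simp [h]
    · intro v _ hv
      unfold qdist
      simp [hv]
    · simp
  rw [Finset.sum_congr rfl (fun σ _ => hred σ)]
  by_cases hadj : K.Adj a z.2
  case neg =>
    have h1 : ∀ σ : V → Bool, srwMatrix (lamplighter K) (σ, a) z = 0 := by
      intro σ
      unfold srwMatrix
      rw [if_neg]
      intro h
      exact hadj h.1
    have h2 : srwMatrix K a z.2 = 0 := by unfold srwMatrix; rw [if_neg hadj]
    simp [h1, h2]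
  case pos =>
    have hne : a ≠ z.2 := hadj.ne
    have hM : ∀ σ : V → Bool, srwMatrix (lamplighter K) (σ, a) z
        = if (∀ w, w ≠ a → w ≠ z.2 → σ w = z.1 w) then ((4 * K.degree a : ℕ) : ℝ)⁻¹ else 0 := by
      intro σ
      unfold srwMatrix
      rw [lamplighter_degree]
      by_cases h : ∀ w, w ≠ a → w ≠ z.2 → σ w = z.1 w
      · rw [if_pos ⟨hadj, h⟩, if_pos h]
      · rw [if_neg (fun hc => h hc.2), if_neg h]
    have hsum : (∑ σ : V → Bool, if ∀ u ∉ S, σ u = x.1 u then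
          ((2 : ℝ) ^ S.card)⁻¹ * srwMatrix (lamplighter K) (σ, a) z else 0)
        = ∑ σ : V → Bool, if ((∀ u ∉ S, σ u = x.1 u) ∧ ∀ w, w ≠ a → w ≠ z.2 → σ w = z.1 w)
            then ((2 : ℝ) ^ S.card)⁻¹ * ((4 * K.degree a : ℕ) : ℝ)⁻¹ else 0 := by
      refine Finset.sum_congr rfl (fun σ _ => ?_)
      rw [hM σ]
      by_cases h1 : ∀ u ∉ S, σ u = x.1 u
      · by_cases h2 : ∀ w, w ≠ a → w ≠ z.2 → σ w = z.1 w
        · rw [if_pos h1, if_pos h2, if_pos ⟨h1, h2⟩]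
        · rw [if_pos h1, if_neg h2, if_neg (fun hc => h2 hc.2), mul_zero]
      · rw [if_neg h1, if_neg (fun hc => h1 hc.1)]
    rw [hsum, Finset.sum_ite, Finset.sum_const_zero, add_zero, Finset.sum_const, nsmul_eq_mul]
    by_cases hz : ∀ u ∉ insert z.2 S, z.1 u = x.1 u
    case neg =>
      push_neg at hz
      obtain ⟨u, huS, hu⟩ := hz
      simp only [Finset.mem_insert, not_or] at huS
      have hempty : (Finset.univ.filter (fun σ : V → Bool =>
          (∀ u ∉ S, σ u = x.1 u) ∧ ∀ w, w ≠ a → w ≠ z.2 → σ w = z.1 w)) = ∅ := by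
        ext σ
        simp only [Finset.mem_filter, Finset.mem_univ, true_and, Finset.notMem_empty, iff_false]
        rintro ⟨hx1, hz1⟩
        have hua : u ≠ a := fun h => huS.2 (h ▸ ha)
        exact hu ((hz1 u hua huS.1).symm.trans (hx1 u huS.2))
      rw [hempty]
      have : qdist x (insert z.2 S) z.2 z = 0 := by
        unfold qdist
        rw [if_neg]
        rintro ⟨-, hcomp⟩
        exact hu (hcomp u (by simp [huS.1, huS.2]))
      simp [this]
    case pos =>
      have hfilter : (Finset.univ.filter (fun σ : V → Bool =>
          (∀ u ∉ S, σ u = x.1 u) ∧ ∀ w, w ≠ a → w ≠ z.2 → σ w = z.1 w))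
          = Finset.univ.filter (fun σ : V → Bool =>
            ∀ u ∉ S ∩ ({a, z.2} : Finset V), σ u = (if u ∈ S then z.1 u else x.1 u)) := by
        ext σ
        simp only [Finset.mem_filter, Finset.mem_univ, true_and]
        constructor
        · rintro ⟨hx1, hz1⟩ u hu
          simp only [Finset.mem_inter, Finset.mem_insert, Finset.mem_singleton, not_and_or,
            not_or] at hu
          by_cases huS : u ∈ S
          · rw [if_pos huS]
            rcases hu with h | h
            · exact absurd huS h
            · exact hz1 u h.1 h.2
          · rw [if_neg huS]
            exact hx1 u huS
        · intro h
          constructor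
          · intro u huS
            have := h u (by simp [huS])
            rwa [if_neg huS] at this
          · intro w hwa hwz
            by_cases hwS : w ∈ S
            · have := h w (by simp [hwa, hwz])
              rwa [if_pos hwS] at this
            · have h1 := h w (by simp [hwS])
              rw [if_neg hwS] at h1
              have h2 : z.1 w = x.1 w := hz w (by simp [hwz, hwS])
              rw [h1, h2]
      rw [hfilter, card_compat]
      have hq : qdist x (insert z.2 S) z.2 z = ((2 : ℝ) ^ (insert z.2 S).card)⁻¹ := by
        unfold qdist
        rw [if_pos ⟨rfl, hz⟩]
      rw [hq]
      have hsrw : srwMatrix K a z.2 = ((K.degree a : ℕ) : ℝ)⁻¹ := by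
        unfold srwMatrix; rw [if_pos hadj]
      rw [hsrw]
      have hdegpos : (0 : ℝ) < (K.degree a : ℝ) := by
        have : 0 < K.degree a := K.degree_pos_iff_exists_adj a |>.mpr ⟨z.2, hadj⟩
        exact_mod_cast this
      by_cases hz2 : z.2 ∈ S
      · have hins : insert z.2 S = S := Finset.insert_eq_self.mpr hz2
        have hint : S ∩ ({a, z.2} : Finset V) = {a, z.2} :=
          Finset.inter_eq_right.mpr (by intro u hu; simp at hu; rcases hu with rfl | rfl <;>
            assumption)
        rw [hins, hint]
        rw [Finset.card_insert_of_notMem (by simp [hne]), Finset.card_singleton]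
        push_cast
        field_simp
      · have hint : S ∩ ({a, z.2} : Finset V) = {a} := by
          ext u
          simp only [Finset.mem_inter, Finset.mem_insert, Finset.mem_singleton]
          constructor
          · rintro ⟨huS, rfl | rfl⟩
            · rfl
            · exact absurd huS hz2
          · rintro rfl; exact ⟨ha, Or.inl rfl⟩
        rw [hint, Finset.card_singleton, Finset.card_insert_of_notMem hz2]
        push_cast
        field_simp
        ring

lemma snoc_zero' {t : ℕ} (w : Fin (t + 1) → V) (u : V) :
    (Fin.snoc w u : Fin (t + 2) → V) 0 = w 0 := by
  rw [show (0 : Fin (t + 2)) = Fin.castSucc 0 by simp, Fin.snoc_castSucc]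

lemma image_snoc {t : ℕ} (w : Fin (t + 1) → V) (u : V) :
    Finset.univ.image (Fin.snoc w u : Fin (t + 2) → V)
      = insert u (Finset.univ.image w) := by
  ext a
  simp only [Finset.mem_image, Finset.mem_insert, Finset.mem_univ, true_and]
  constructor
  · rintro ⟨i, rfl⟩
    induction i using Fin.lastCases with
    | last => left; rw [Fin.snoc_last]
    | cast j => right; exact ⟨j, (Fin.snoc_castSucc _ _ _).symm ▸ rfl⟩
  · rintro (rfl | ⟨i, rfl⟩)
    · exact ⟨Fin.last _, Fin.snoc_last _ _⟩
    · exact ⟨i.castSucc, Fin.snoc_castSucc _ _ _⟩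

lemma prod_snoc {t : ℕ} (A : Matrix V V ℝ) (w : Fin (t + 1) → V) (u : V) :
    (∏ i : Fin (t + 1), A ((Fin.snoc w u : Fin (t + 2) → V) i.castSucc)
        ((Fin.snoc w u : Fin (t + 2) → V) i.succ))
      = (∏ i : Fin t, A (w i.castSucc) (w i.succ)) * A (w (Fin.last t)) u := by
  rw [Fin.prod_univ_castSucc]
  congr 1
  · refine Finset.prod_congr rfl (fun i _ => ?_)
    rw [Fin.succ_castSucc, Fin.snoc_castSucc, Fin.snoc_castSucc]
  · rw [Fin.snoc_castSucc, Fin.succ_last, Fin.snoc_last]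

lemma sum_snoc_decomp {t : ℕ} (f : (Fin (t + 2) → V) → ℝ) :
    ∑ w' : Fin (t + 2) → V, f w'
      = ∑ w : Fin (t + 1) → V, ∑ u : V, f (Fin.snoc w u) := by
  have h := Fintype.sum_equiv
    (⟨fun p => Fin.snoc p.1 p.2, fun w' => (Fin.init w', w' (Fin.last _)),
      fun p => by simp [Fin.init_snoc, Fin.snoc_last],
      fun w' => by simp [Fin.snoc_init_self]⟩ :
      ((Fin (t + 1) → V) × V) ≃ (Fin (t + 2) → V))
    (fun p => f (Fin.snoc p.1 p.2)) f (fun p => rfl)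
  rw [← h, Fintype.sum_prod_type]

lemma srw_row_sum (K : SimpleGraph V) [DecidableRel K.Adj] (a : V) (hdeg : 0 < K.degree a) :
    ∑ u : V, srwMatrix K a u = 1 := by
  unfold srwMatrix
  rw [Finset.sum_ite, Finset.sum_const_zero, add_zero, Finset.sum_const, nsmul_eq_mul]
  have : (Finset.univ.filter (fun u => K.Adj a u)).card = K.degree a := by
    rw [← SimpleGraph.card_neighborFinset_eq_degree]
    congr 1
    ext u; simp [SimpleGraph.mem_neighborFinset]
  rw [this]
  have hpos : (0 : ℝ) < (K.degree a : ℝ) := by exact_mod_cast hdeg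
  field_simp

lemma lam_sum (K : SimpleGraph V) [DecidableRel K.Adj] (hdeg : ∀ u : V, 0 < K.degree u)
    (v : V) : ∀ t : ℕ, ∑ w : Fin (t + 1) → V,
      (if w 0 = v then ∏ i : Fin t, srwMatrix K (w i.castSucc) (w i.succ) else 0) = 1 := by
  intro t
  induction t with
  | zero =>
    rw [← Equiv.sum_comp (Equiv.funUnique (Fin 1) V).symm]
    simp [Equiv.funUnique]
  | succ t ih =>
    rw [sum_snoc_decomp]
    rw [← ih]
    refine Finset.sum_congr rfl (fun w _ => ?_)
    have hterm : ∀ u : V, (if (Fin.snoc w u : Fin (t + 2) → V) 0 = v then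
        ∏ i : Fin (t + 1), srwMatrix K ((Fin.snoc w u : Fin (t + 2) → V) i.castSucc)
          ((Fin.snoc w u : Fin (t + 2) → V) i.succ) else 0)
        = (if w 0 = v then ∏ i : Fin t, srwMatrix K (w i.castSucc) (w i.succ) else 0)
            * srwMatrix K (w (Fin.last t)) u := by
      intro u
      rw [snoc_zero', prod_snoc]
      by_cases h : w 0 = v <;> simp [h]
    rw [Finset.sum_congr rfl (fun u _ => hterm u), ← Finset.mul_sum,
      srw_row_sum K _ (hdeg _), mul_one]

lemma key (K : SimpleGraph V) [DecidableRel K.Adj] (x : (V → Bool) × V) :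
    ∀ t : ℕ, ∀ z : (V → Bool) × V,
      ((srwMatrix (lamplighter K)) ^ (t + 1)) x z
        = ∑ w : Fin (t + 2) → V,
            (if w 0 = x.2 then ∏ i : Fin (t + 1), srwMatrix K (w i.castSucc) (w i.succ) else 0)
              * qdist x (Finset.univ.image w) (w (Fin.last (t + 1))) z := by
  intro t
  induction t with
  | zero =>
    intro z
    rw [pow_one]
    rw [← Equiv.sum_comp (piFinTwoEquiv (fun _ => V)).symm]
    rw [Fintype.sum_prod_type]
    have hterm : ∀ a b : V,
        (if (piFinTwoEquiv (fun _ => V)).symm (a, b) 0 = x.2 then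
          ∏ i : Fin 1, srwMatrix K ((piFinTwoEquiv (fun _ => V)).symm (a, b) i.castSucc)
            ((piFinTwoEquiv (fun _ => V)).symm (a, b) i.succ) else 0)
          * qdist x (Finset.univ.image ((piFinTwoEquiv (fun _ => V)).symm (a, b)))
            ((piFinTwoEquiv (fun _ => V)).symm (a, b) (Fin.last 1)) z
        = if a = x.2 then srwMatrix K a b * qdist x ({a, b} : Finset V) b z else 0 := by
      intro a b
      have h0 : (piFinTwoEquiv (fun _ => V)).symm (a, b) 0 = a := rfl
      have h1 : (piFinTwoEquiv (fun _ => V)).symm (a, b) 1 = b := rfl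
      have hlast : (Fin.last 1) = (1 : Fin 2) := rfl
      have himg : Finset.univ.image ((piFinTwoEquiv (fun _ => V)).symm (a, b))
          = ({a, b} : Finset V) := by
        ext c
        simp only [Finset.mem_image, Finset.mem_univ, true_and, Finset.mem_insert,
          Finset.mem_singleton]
        constructor
        · rintro ⟨i, rfl⟩
          fin_cases i
          · left; rfl
          · right; rfl
        · rintro (rfl | rfl)
          · exact ⟨0, rfl⟩
          · exact ⟨1, rfl⟩
      rw [Fin.prod_univ_one, h0, himg, hlast, h1]
      have hcs : (0 : Fin 1).castSucc = (0 : Fin 2) := rfl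
      have hsc : (0 : Fin 1).succ = (1 : Fin 2) := rfl
      rw [hcs, hsc, h0, h1]
      by_cases h : a = x.2 <;> simp [h]
    rw [Finset.sum_congr rfl (fun a _ => Finset.sum_congr rfl (fun b _ => hterm a b))]
    have hcol : ∀ a : V, (∑ b : V, if a = x.2 then srwMatrix K a b * qdist x ({a, b} : Finset V) b z else 0)
        = if a = x.2 then (∑ b : V, srwMatrix K a b * qdist x ({a, b} : Finset V) b z) else 0 := by
      intro a
      by_cases h : a = x.2 <;> simp [h]
    rw [Finset.sum_congr rfl (fun a _ => hcol a),
      Finset.sum_ite_eq' Finset.univ x.2, if_pos (Finset.mem_univ _)]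
    rw [Finset.sum_eq_single z.2]
    · by_cases hadj : K.Adj x.2 z.2
      · have hne : x.2 ≠ z.2 := hadj.ne
        have hcard : ({x.2, z.2} : Finset V).card = 2 := by
          rw [Finset.card_insert_of_notMem (by simp [hne]), Finset.card_singleton]
        unfold srwMatrix qdist
        rw [lamplighter_degree, hcard]
        by_cases hcomp : ∀ w, w ≠ x.2 → w ≠ z.2 → x.1 w = z.1 w
        · have hAdj : (lamplighter K).Adj x z := ⟨hadj, hcomp⟩
          have hq : (z.2 = z.2 ∧ ∀ u ∉ ({x.2, z.2} : Finset V), z.1 u = x.1 u) :=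
            ⟨rfl, fun u hu => by
              simp only [Finset.mem_insert, Finset.mem_singleton, not_or] at hu
              exact (hcomp u hu.1 hu.2).symm⟩
          rw [if_pos hAdj, if_pos hadj, if_pos hq]
          have hdegpos : (0 : ℝ) < (K.degree x.2 : ℝ) := by
            have : 0 < K.degree x.2 := K.degree_pos_iff_exists_adj x.2 |>.mpr ⟨z.2, hadj⟩
            exact_mod_cast this
          push_cast
          field_simp
          ring
        · have hnAdj : ¬ (lamplighter K).Adj x z := fun hc => hcomp hc.2
          have hnq : ¬ (z.2 = z.2 ∧ ∀ u ∉ ({x.2, z.2} : Finset V), z.1 u = x.1 u) :=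
            fun hc => hcomp (fun w hw1 hw2 => (hc.2 w (by simp [hw1, hw2])).symm)
          rw [if_neg hnAdj, if_neg hnq, mul_zero]
      · have hnAdj : ¬ (lamplighter K).Adj x z := fun hc => hadj hc.1
        unfold srwMatrix
        rw [if_neg hnAdj, if_neg hadj, zero_mul]
    · intro b _ hb
      have : qdist x ({x.2, b} : Finset V) b z = 0 := by
        unfold qdist
        rw [if_neg]
        rintro ⟨h, -⟩
        exact hb h.symm
      rw [this, mul_zero]
    · simp
  | succ t ih =>
    intro z
    rw [pow_succ, Matrix.mul_apply]
    have hswap : ∑ z' : (V → Bool) × V, ((srwMatrix (lamplighter K)) ^ (t + 1)) x z'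
          * srwMatrix (lamplighter K) z' z
        = ∑ w : Fin (t + 2) → V,
            (if w 0 = x.2 then ∏ i : Fin (t + 1), srwMatrix K (w i.castSucc) (w i.succ) else 0)
              * (srwMatrix K (w (Fin.last (t + 1))) z.2
                * qdist x (insert z.2 (Finset.univ.image w)) z.2 z) := by
      calc ∑ z' : (V → Bool) × V, ((srwMatrix (lamplighter K)) ^ (t + 1)) x z'
              * srwMatrix (lamplighter K) z' z
          = ∑ z' : (V → Bool) × V, ∑ w : Fin (t + 2) → V,
              ((if w 0 = x.2 then ∏ i : Fin (t + 1), srwMatrix K (w i.castSucc) (w i.succ) else 0)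
                * qdist x (Finset.univ.image w) (w (Fin.last (t + 1))) z')
                * srwMatrix (lamplighter K) z' z := by
            refine Finset.sum_congr rfl (fun z' _ => ?_)
            rw [ih z', Finset.sum_mul]
        _ = ∑ w : Fin (t + 2) → V,
              (if w 0 = x.2 then ∏ i : Fin (t + 1), srwMatrix K (w i.castSucc) (w i.succ) else 0)
                * ∑ z' : (V → Bool) × V, qdist x (Finset.univ.image w) (w (Fin.last (t + 1))) z'
                  * srwMatrix (lamplighter K) z' z := by
            rw [Finset.sum_comm]
            refine Finset.sum_congr rfl (fun w _ => ?_)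
            rw [Finset.mul_sum]
            refine Finset.sum_congr rfl (fun z' _ => ?_)
            ring
        _ = _ := by
            refine Finset.sum_congr rfl (fun w _ => ?_)
            rw [step_kernel K x (Finset.univ.image w) (w (Fin.last (t + 1)))
              (Finset.mem_image_of_mem _ (Finset.mem_univ _)) z]
    rw [hswap, sum_snoc_decomp (t := t + 1)]
    refine Finset.sum_congr rfl (fun w _ => ?_)
    rw [Finset.sum_eq_single z.2]
    · rw [snoc_zero', prod_snoc, image_snoc, Fin.snoc_last]
      by_cases h : w 0 = x.2 <;> simp [h] <;> ring
    · intro u _ hu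
      have : qdist x (Finset.univ.image (Fin.snoc w u : Fin (t + 3) → V))
          ((Fin.snoc w u : Fin (t + 3) → V) (Fin.last (t + 2))) z = 0 := by
        rw [Fin.snoc_last]
        unfold qdist
        rw [if_neg]
        rintro ⟨h, -⟩
        exact hu h.symm
      rw [this, mul_zero]
    · simp

lemma qdist_nonneg (x : (V → Bool) × V) (S : Finset V) (v : V) (z : (V → Bool) × V) :
    0 ≤ qdist x S v z := by
  unfold qdist
  split_ifs
  · positivity
  · exact le_refl 0

lemma entropy_qdist (x : (V → Bool) × V) (S : Finset V) (v : V) :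
    (∑ z : (V → Bool) × V, Real.negMulLog (qdist x S v z)) = S.card * Real.log 2 := by
  rw [Fintype.sum_prod_type]
  have hin : ∀ σ : V → Bool, (∑ v' : V, Real.negMulLog (qdist x S v (σ, v')))
      = if (∀ u ∉ S, σ u = x.1 u) then Real.negMulLog (((2 : ℝ) ^ S.card)⁻¹) else 0 := by
    intro σ
    rw [Finset.sum_eq_single v]
    · unfold qdist
      by_cases h : ∀ u ∉ S, σ u = x.1 u
      · rw [if_pos ⟨rfl, h⟩, if_pos h]
      · rw [if_neg (fun hc => h hc.2), if_neg h, Real.negMulLog_zero]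
    · intro v' _ hv'
      unfold qdist
      rw [if_neg (fun hc => hv' hc.1)]
      exact Real.negMulLog_zero
    · simp
  rw [Finset.sum_congr rfl (fun σ _ => hin σ), Finset.sum_ite, Finset.sum_const_zero, add_zero,
    Finset.sum_const, nsmul_eq_mul, card_compat]
  have h2 : (0 : ℝ) < 2 ^ S.card := by positivity
  rw [Real.negMulLog, Real.log_inv, Real.log_pow]
  push_cast
  field_simp

lemma lam_nonneg (K : SimpleGraph V) [DecidableRel K.Adj] (v : V) {t : ℕ}
    (w : Fin (t + 1) → V) :
    0 ≤ (if w 0 = v then ∏ i : Fin t, srwMatrix K (w i.castSucc) (w i.succ) else 0) := by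
  split_ifs
  · refine Finset.prod_nonneg (fun i _ => ?_)
    unfold srwMatrix
    split_ifs
    · positivity
    · exact le_refl 0
  · exact le_refl 0


end Aux

/-- If the SRW on `K` has linearly growing expected range up to time
`c₁·|V(K)|`, then the SRW on the lamplighter graph over `K` has linear growth of entropy up to
time `c₃·log|V(G)|`. -/
theorem stmt12 (c₁ c₂ : ℝ) (hc₁ : 0 < c₁) (hc₂ : 0 < c₂) :
    ∃ c₃ c₄ : ℝ, 0 < c₃ ∧ 0 < c₄ ∧
      ∀ (V : Type) [Fintype V] [DecidableEq V] (K : SimpleGraph V) [DecidableRel K.Adj],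
        K.Connected →
        (∀ (v : V) (t : ℕ), 1 ≤ t → (t : ℝ) ≤ c₁ * Fintype.card V →
          c₂ * t ≤ ∑ y : Fin (t + 1) → V,
            (if y 0 = v then ∏ i : Fin t, srwMatrix K (y i.castSucc) (y i.succ) else 0) *
              ((Finset.univ.image y).card : ℝ)) →
        ∀ (x : (V → Bool) × V) (t : ℕ), 1 ≤ t →
          (t : ℝ) ≤ c₃ * Real.log (Fintype.card ((V → Bool) × V)) →
          c₄ * t ≤ entropy (fun y => ((srwMatrix (lamplighter K)) ^ t) x y) := by
  have hlog2 : 0 < Real.log 2 := Real.log_pos (by norm_num)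
  refine ⟨min (c₁ / (Real.log 2 + 1)) (1 / (2 * Real.log 2)), c₂ * Real.log 2,
    lt_min (by positivity) (by positivity), by positivity, ?_⟩
  intro V _ _ K _ hconn hrange x t ht htle
  have hVne : Nonempty V := hconn.nonempty
  set n := Fintype.card V with hn
  have hn1 : 1 ≤ n := Fintype.card_pos
  have hcardG : Fintype.card ((V → Bool) × V) = 2 ^ n * n := by
    rw [Fintype.card_prod, Fintype.card_fun, Fintype.card_bool]
  -- n ≥ 2
  have hn2 : 2 ≤ n := by
    by_contra h
    have hne1 : n = 1 := by omega
    have hc2 : Fintype.card ((V → Bool) × V) = 2 := by rw [hcardG, hne1]; norm_num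
    rw [hc2] at htle
    have h1 : min (c₁ / (Real.log 2 + 1)) (1 / (2 * Real.log 2)) * Real.log 2
        ≤ (1 / (2 * Real.log 2)) * Real.log 2 :=
      mul_le_mul_of_nonneg_right (min_le_right _ _) hlog2.le
    have h2 : (1 / (2 * Real.log 2)) * Real.log 2 = 1 / 2 := by field_simp
    have h3 : (1 : ℝ) ≤ t := by exact_mod_cast ht
    push_cast at htle
    linarith
  -- degrees positive
  have hdeg : ∀ u : V, 0 < K.degree u := by
    intro u
    rw [K.degree_pos_iff_exists_adj]
    obtain ⟨v, hvu⟩ := Fintype.exists_ne_of_one_lt_card (by omega) u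
    obtain ⟨p⟩ := hconn.preconnected u v
    cases p with
    | nil => exact absurd rfl hvu
    | cons hadj _ => exact ⟨_, hadj⟩
  -- t ≤ c₁ * n
  have hnR : (1 : ℝ) ≤ (n : ℝ) := by exact_mod_cast hn1
  have hlogval : Real.log (Fintype.card ((V → Bool) × V))
      = n * Real.log 2 + Real.log n := by
    rw [hcardG]
    push_cast
    rw [Real.log_mul (by positivity) (by positivity), Real.log_pow]
  have hlogle : Real.log (Fintype.card ((V → Bool) × V)) ≤ n * (Real.log 2 + 1) := by
    rw [hlogval]
    have : Real.log n ≤ (n : ℝ) - 1 := Real.log_le_sub_one_of_pos (by positivity)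
    nlinarith
  have hlognn : 0 ≤ Real.log (Fintype.card ((V → Bool) × V)) := by
    refine Real.log_nonneg ?_
    rw [hcardG]
    have : 1 ≤ 2 ^ n * n := Nat.one_le_iff_ne_zero.mpr (by positivity)
    exact_mod_cast this
  have htn : (t : ℝ) ≤ c₁ * n := by
    have h1 : (t : ℝ) ≤ (c₁ / (Real.log 2 + 1)) * (n * (Real.log 2 + 1)) := by
      calc (t : ℝ) ≤ min (c₁ / (Real.log 2 + 1)) (1 / (2 * Real.log 2))
            * Real.log (Fintype.card ((V → Bool) × V)) := htle
        _ ≤ (c₁ / (Real.log 2 + 1)) * (n * (Real.log 2 + 1)) := by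
            refine mul_le_mul (min_le_left _ _) hlogle hlognn (by positivity)
    calc (t : ℝ) ≤ (c₁ / (Real.log 2 + 1)) * (n * (Real.log 2 + 1)) := h1
      _ = c₁ * n := by field_simp
  -- decompose t = s + 1
  obtain ⟨s, rfl⟩ : ∃ s, t = s + 1 := ⟨t - 1, by omega⟩
  -- Jensen
  have hkey := key K x s
  have hjensen : ∀ z : (V → Bool) × V,
      (∑ w : Fin (s + 2) → V,
        (if w 0 = x.2 then ∏ i : Fin (s + 1), srwMatrix K (w i.castSucc) (w i.succ) else 0)
          * Real.negMulLog (qdist x (Finset.univ.image w) (w (Fin.last (s + 1))) z))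
      ≤ Real.negMulLog (((srwMatrix (lamplighter K)) ^ (s + 1)) x z) := by
    intro z
    have := Real.concaveOn_negMulLog.le_map_sum
      (t := (Finset.univ : Finset (Fin (s + 2) → V)))
      (w := fun w => (if w 0 = x.2 then
        ∏ i : Fin (s + 1), srwMatrix K (w i.castSucc) (w i.succ) else 0))
      (p := fun w => qdist x (Finset.univ.image w) (w (Fin.last (s + 1))) z)
      (fun w _ => lam_nonneg K x.2 w)
      (lam_sum K hdeg x.2 (s + 1))
      (fun w _ => qdist_nonneg x _ _ z)
    simp only [smul_eq_mul] at this
    rw [← hkey z] at this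
    exact this
  have hsum : ∑ z : (V → Bool) × V, ∑ w : Fin (s + 2) → V,
        (if w 0 = x.2 then ∏ i : Fin (s + 1), srwMatrix K (w i.castSucc) (w i.succ) else 0)
          * Real.negMulLog (qdist x (Finset.univ.image w) (w (Fin.last (s + 1))) z)
      ≤ entropy (fun y => ((srwMatrix (lamplighter K)) ^ (s + 1)) x y) :=
    Finset.sum_le_sum (fun z _ => hjensen z)
  have hswap : ∑ z : (V → Bool) × V, ∑ w : Fin (s + 2) → V,
        (if w 0 = x.2 then ∏ i : Fin (s + 1), srwMatrix K (w i.castSucc) (w i.succ) else 0)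
          * Real.negMulLog (qdist x (Finset.univ.image w) (w (Fin.last (s + 1))) z)
      = (∑ w : Fin (s + 2) → V,
        (if w 0 = x.2 then ∏ i : Fin (s + 1), srwMatrix K (w i.castSucc) (w i.succ) else 0)
          * ((Finset.univ.image w).card : ℝ)) * Real.log 2 := by
    rw [Finset.sum_comm, Finset.sum_mul]
    refine Finset.sum_congr rfl (fun w _ => ?_)
    rw [← Finset.mul_sum, entropy_qdist]
    ring
  have hrange' := hrange x.2 (s + 1) (by omega) (by exact_mod_cast htn)
  have hfinal : (c₂ * Real.log 2) * ((s : ℝ) + 1)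
      ≤ (∑ w : Fin (s + 2) → V,
        (if w 0 = x.2 then ∏ i : Fin (s + 1), srwMatrix K (w i.castSucc) (w i.succ) else 0)
          * ((Finset.univ.image w).card : ℝ)) * Real.log 2 := by
    have := mul_le_mul_of_nonneg_right hrange' hlog2.le
    push_cast at this ⊢
    linarith
  push_cast
  calc (c₂ * Real.log 2) * ((s : ℝ) + 1)
      ≤ _ := hfinal
    _ = _ := hswap.symm
    _ ≤ _ := hsum
end
end

section
/- For every integer b ≥ 1, any two random variables W and Z taking values in countable sets satisfy H_b(W) ≤ 2^{b−1}·(H_b(W|Z) + H_b(Z)). -/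
open Filter

noncomputable section

/-- For jointly distributed random variables `W, Z` on countable sets
(given by a joint probability mass function `p`),
`H_b(W) ≤ 2^{b-1}·(H_b(W|Z) + H_b(Z))`, where all the entropy-like quantities are computed
in `ℝ≥0∞` (so that the inequality also covers the infinite case). -/
theorem stmt18 (b : ℕ) (hb : 1 ≤ b) (W Z : Type*) [Countable W] [Countable Z]
    (p : W × Z → ℝ) (hp : ∀ x, 0 ≤ p x) (hsum : HasSum p 1) :
    (∑' w : W, ENNReal.ofReal ((∑' z : Z, p (w, z)) *
        (-Real.log (∑' z : Z, p (w, z))) ^ b)) ≤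
      2 ^ (b - 1) *
        ((∑' z : Z, ENNReal.ofReal (∑' w : W, p (w, z)) *
            ∑' w : W, ENNReal.ofReal ((p (w, z) / ∑' w' : W, p (w', z)) *
              (-Real.log (p (w, z) / ∑' w' : W, p (w', z))) ^ b)) +
          ∑' z : Z, ENNReal.ofReal ((∑' w : W, p (w, z)) *
            (-Real.log (∑' w : W, p (w, z))) ^ b)) := by
  have hps : Summable p := hsum.summable
  have hrow : ∀ w : W, Summable (fun z : Z => p (w, z)) := fun w =>
    hps.comp_injective (Prod.mk_right_injective w)
  have hcol : ∀ z : Z, Summable (fun w : W => p (w, z)) := fun z =>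
    hps.comp_injective (Prod.mk_left_injective z)
  set pW : W → ℝ := fun w => ∑' z, p (w, z) with hpWdef
  set pZ : Z → ℝ := fun z => ∑' w, p (w, z) with hpZdef
  have hpWnn : ∀ w, 0 ≤ pW w := fun w => tsum_nonneg (fun z => hp _)
  have hpZnn : ∀ z, 0 ≤ pZ z := fun z => tsum_nonneg (fun w => hp _)
  have hle_pW : ∀ w z, p (w, z) ≤ pW w := fun w z =>
    Summable.le_tsum (hrow w) z (fun _ _ => hp _)
  have hle_pZ : ∀ w z, p (w, z) ≤ pZ z := fun w z =>
    Summable.le_tsum (hcol z) w (fun _ _ => hp _)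
  have hpW1 : ∀ w, pW w ≤ 1 := by
    intro w
    have := Summable.tsum_le_tsum_of_inj (fun z : Z => (w, z)) (Prod.mk_right_injective w)
      (fun c _ => hp c) (fun z => le_rfl) (hrow w) hps
    simpa [hsum.tsum_eq] using this
  have hpZ1 : ∀ z, pZ z ≤ 1 := by
    intro z
    have := Summable.tsum_le_tsum_of_inj (fun w : W => (w, z)) (Prod.mk_left_injective z)
      (fun c _ => hp c) (fun w => le_rfl) (hcol z) hps
    simpa [hsum.tsum_eq] using this
  -- key pointwise inequality
  have key : ∀ w z,
      ENNReal.ofReal (p (w, z) * (-Real.log (pW w)) ^ b) ≤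
        2 ^ (b - 1) *
          (ENNReal.ofReal (p (w, z) * (-Real.log (p (w, z) / pZ z)) ^ b) +
            ENNReal.ofReal (p (w, z) * (-Real.log (pZ z)) ^ b)) := by
    intro w z
    rcases eq_or_lt_of_le (hp (w, z)) with h0 | hpos
    · simp [← h0]
    · have hZpos : 0 < pZ z := lt_of_lt_of_le hpos (hle_pZ w z)
      have hWpos : 0 < pW w := lt_of_lt_of_le hpos (hle_pW w z)
      set A : ℝ := -Real.log (p (w, z) / pZ z) with hA
      set B : ℝ := -Real.log (pZ z) with hB
      have hAnn : 0 ≤ A := by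
        have : p (w, z) / pZ z ≤ 1 := (div_le_one hZpos).2 (hle_pZ w z)
        simpa [hA] using neg_nonneg.2 (Real.log_nonpos (by positivity) this)
      have hBnn : 0 ≤ B := by
        simpa [hB] using neg_nonneg.2 (Real.log_nonpos hZpos.le (hpZ1 z))
      have hLw : 0 ≤ -Real.log (pW w) :=
        neg_nonneg.2 (Real.log_nonpos hWpos.le (hpW1 w))
      have hsplit : -Real.log (p (w, z)) = A + B := by
        rw [hA, hB, Real.log_div hpos.ne' hZpos.ne']; ring
      have h1 : -Real.log (pW w) ≤ A + B := by
        rw [← hsplit]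
        exact neg_le_neg (Real.log_le_log hpos (hle_pW w z))
      have hreal : p (w, z) * (-Real.log (pW w)) ^ b ≤
          2 ^ (b - 1) * (p (w, z) * A ^ b + p (w, z) * B ^ b) := by
        calc p (w, z) * (-Real.log (pW w)) ^ b
            ≤ p (w, z) * (A + B) ^ b :=
              mul_le_mul_of_nonneg_left (pow_le_pow_left₀ hLw h1 b) (hp _)
          _ ≤ p (w, z) * (2 ^ (b - 1) * (A ^ b + B ^ b)) :=
              mul_le_mul_of_nonneg_left (add_pow_le hAnn hBnn b) (hp _)
          _ = 2 ^ (b - 1) * (p (w, z) * A ^ b + p (w, z) * B ^ b) := by ring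
      calc ENNReal.ofReal (p (w, z) * (-Real.log (pW w)) ^ b)
          ≤ ENNReal.ofReal (2 ^ (b - 1) * (p (w, z) * A ^ b + p (w, z) * B ^ b)) :=
            ENNReal.ofReal_le_ofReal hreal
        _ = 2 ^ (b - 1) *
            (ENNReal.ofReal (p (w, z) * A ^ b) + ENNReal.ofReal (p (w, z) * B ^ b)) := by
            rw [ENNReal.ofReal_mul (by positivity),
              ENNReal.ofReal_add (by positivity) (by positivity)]
            congr 1
            rw [ENNReal.ofReal_pow (by norm_num)]
            norm_num
  -- expand LHS as a double sum
  have hLHS : (∑' w : W, ENNReal.ofReal (pW w * (-Real.log (pW w)) ^ b)) =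
      ∑' w : W, ∑' z : Z, ENNReal.ofReal (p (w, z) * (-Real.log (pW w)) ^ b) := by
    refine tsum_congr fun w => ?_
    rw [show pW w * (-Real.log (pW w)) ^ b
        = ∑' z, p (w, z) * (-Real.log (pW w)) ^ b by rw [tsum_mul_right],
      ENNReal.ofReal_tsum_of_nonneg (fun z => mul_nonneg (hp _)
        (pow_nonneg (neg_nonneg.2 (Real.log_nonpos (hpWnn w) (hpW1 w))) b))
        ((hrow w).mul_right _)]
  rw [hLHS]
  calc (∑' w : W, ∑' z : Z, ENNReal.ofReal (p (w, z) * (-Real.log (pW w)) ^ b))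
      ≤ ∑' w : W, ∑' z : Z, (2 ^ (b - 1) *
          (ENNReal.ofReal (p (w, z) * (-Real.log (p (w, z) / pZ z)) ^ b) +
            ENNReal.ofReal (p (w, z) * (-Real.log (pZ z)) ^ b))) :=
        ENNReal.tsum_le_tsum fun w => ENNReal.tsum_le_tsum fun z => key w z
    _ = 2 ^ (b - 1) * ((∑' z : Z, ∑' w : W,
          ENNReal.ofReal (p (w, z) * (-Real.log (p (w, z) / pZ z)) ^ b)) +
        ∑' z : Z, ∑' w : W, ENNReal.ofReal (p (w, z) * (-Real.log (pZ z)) ^ b)) := by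
        simp_rw [ENNReal.tsum_mul_left, mul_add, ENNReal.tsum_add]
        rw [ENNReal.tsum_comm (f := fun w z =>
            ENNReal.ofReal (p (w, z) * (-Real.log (p (w, z) / pZ z)) ^ b)),
          ENNReal.tsum_comm (f := fun w z =>
            ENNReal.ofReal (p (w, z) * (-Real.log (pZ z)) ^ b))]
        ring
    _ = 2 ^ (b - 1) *
        ((∑' z : Z, ENNReal.ofReal (pZ z) *
            ∑' w : W, ENNReal.ofReal ((p (w, z) / pZ z) *
              (-Real.log (p (w, z) / pZ z)) ^ b)) +
          ∑' z : Z, ENNReal.ofReal (pZ z * (-Real.log (pZ z)) ^ b)) := by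
        congr 1
        congr 1
        · refine tsum_congr fun z => ?_
          rw [← ENNReal.tsum_mul_left]
          refine tsum_congr fun w => ?_
          rw [← ENNReal.ofReal_mul (hpZnn z)]
          congr 1
          rcases eq_or_lt_of_le (hpZnn z) with h0 | hZpos
          · have hz : p (w, z) = 0 := le_antisymm ((hle_pZ w z).trans h0.ge) (hp _)
            simp [hz, ← h0]
          · field_simp
        · refine tsum_congr fun z => ?_
          rw [show pZ z * (-Real.log (pZ z)) ^ b
              = ∑' w, p (w, z) * (-Real.log (pZ z)) ^ b by rw [tsum_mul_right],
            ENNReal.ofReal_tsum_of_nonneg (fun w => mul_nonneg (hp _)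
              (pow_nonneg (neg_nonneg.2 (Real.log_nonpos (hpZnn z) (hpZ1 z))) b))
              ((hcol z).mul_right _)]
end
end
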